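/- arXiv:2503.14794 — 7 statements merged into one kernel-verified Lean document; each statement's English description precedes it below -/
import Mathlib

section
/- Let k be a field and let C be a k-linear triangulated category all of whose morphism spaces Hom_C(X, Y) are finite-dimensional over k. Let (A_n → B_n → C_n → A_n[1])_{n ≥ 1} be an inverse system of distinguished triangles in C. If the inverse systems (A_n) and (C_n) are constant as pro-objects, then the inverse system (B_n) is constant as a pro-object. -/
open CategoryTheory CategoryTheory.Limits CategoryTheory.Pretriangulated

universe v u w

/-- The composite transition map `X (n + k) ⟶ X n` of an inverse system
`(X, t : ∀ n, X (n+1) ⟶ X n)`. -/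
def transComp {C : Type u} [Category.{v} C] (X : ℕ → C) (t : ∀ n, X (n + 1) ⟶ X n)
    (n : ℕ) : ∀ k : ℕ, X (n + k) ⟶ X n
  | 0 => 𝟙 (X n)
  | k + 1 => t (n + k) ≫ transComp X t n k

/-- An inverse system `(X, t)` in a category `C` is *constant as a pro-object* if there
are an object `L` and compatible morphisms `e n : L ⟶ X n` such that for every object `D`
the canonical map `colim_n Hom(X n, D) → Hom(L, D)` is bijective, i.e.: every morphism
`L ⟶ D` factors through some `e n`, and any two morphisms `X n ⟶ D` equalized by `e n`
become equal after composing with some composite transition map `X (n + k) ⟶ X n`. -/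
def IsConstantPro {C : Type u} [Category.{v} C] (X : ℕ → C) (t : ∀ n, X (n + 1) ⟶ X n) :
    Prop :=
  ∃ (L : C) (e : ∀ n, L ⟶ X n),
    (∀ n, e (n + 1) ≫ t n = e n) ∧
    (∀ (D : C) (ψ : L ⟶ D), ∃ (n : ℕ) (φ : X n ⟶ D), e n ≫ φ = ψ) ∧
    (∀ (D : C) (n : ℕ) (φ φ' : X n ⟶ D),
      e n ≫ φ = e n ≫ φ' → ∃ k : ℕ, transComp X t n k ≫ φ = transComp X t n k ≫ φ')

/-!
Let `L_A` and `L_Z` be the pro-limits of `A` and `Z`. The maps `h n : Z n ⟶ A n⟦1⟧` induce a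
compatible morphism `L_Z ⟶ L_A⟦1⟧`; complete it to a distinguished triangle
`L_A ⟶ L_B ⟶ L_Z ⟶ L_A⟦1⟧`. For each `n`, the middle components of the morphisms from this
triangle to the `n`-th one which extend the given outer components form a nonempty coset of a
subspace of the finite-dimensional space `Hom(L_B, B n)`. Inverse systems of such cosets satisfy
the Mittag-Leffler condition, so these components can be chosen compatibly. The resulting
`L_B ⟶ B n` exhibit `L_B` as the pro-limit of `B` by the five lemma applied to the long exact
sequences `colim_n Hom(- n, D)` and `Hom(L_-, D)`.
-/

namespace CategoryTheory

variable {C : Type u} [Category.{v} C] [Preadditive C] {J : Type*} [Category J]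

/-- `e` exhibits `L` as the limit of `X` in pro-objects: for every `D`, the canonical map
`colim_j Hom(X j, D) → Hom(L, D)` is surjective (`exists_comp_eq`) and injective
(`exists_map_comp_eq_zero`). -/
structure IsProLimit (X : J ⥤ C) {L : C} (e : ∀ j, L ⟶ X.obj j) : Prop where
  comp_map {i j : J} (a : i ⟶ j) : e i ≫ X.map a = e j
  exists_comp_eq {D : C} (ψ : L ⟶ D) : ∃ j, ∃ φ : X.obj j ⟶ D, e j ≫ φ = ψ
  exists_map_comp_eq_zero {D : C} {j : J} (φ : X.obj j ⟶ D) (hφ : e j ≫ φ = 0) :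
    ∃ i, ∃ a : i ⟶ j, X.map a ≫ φ = 0

namespace IsProLimit

variable {X : J ⥤ C} {L : C} {e : ∀ j, L ⟶ X.obj j}

lemma exists_map_comp_eq [IsCofiltered J] (hX : IsProLimit X e) {D : C} {i j : J}
    (φ : X.obj i ⟶ D) (φ' : X.obj j ⟶ D) (h : e i ≫ φ = e j ≫ φ') :
    ∃ l, ∃ a : l ⟶ i, ∃ b : l ⟶ j, X.map a ≫ φ = X.map b ≫ φ' := by
  obtain ⟨l, c, hc⟩ := hX.exists_map_comp_eq_zero
    (X.map (IsCofiltered.minToLeft i j) ≫ φ - X.map (IsCofiltered.minToRight i j) ≫ φ')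
    (by rw [Preadditive.comp_sub, reassoc_of% (hX.comp_map _), reassoc_of% (hX.comp_map _), h,
      sub_self])
  refine ⟨l, c ≫ IsCofiltered.minToLeft i j, c ≫ IsCofiltered.minToRight i j, ?_⟩
  simpa [sub_eq_zero] using hc

lemma map {D : Type*} [Category D] [Preadditive D] (hX : IsProLimit X e) (F : C ⥤ D)
    [F.IsEquivalence] : IsProLimit (X ⋙ F) (fun j => F.map (e j)) where
  comp_map a := by simp [← F.map_comp, hX.comp_map]
  exists_comp_eq ψ := by
    obtain ⟨j, φ, hφ⟩ := hX.exists_comp_eq (F.preimage (ψ ≫ (F.objObjPreimageIso _).inv))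
    refine ⟨j, F.map φ ≫ (F.objObjPreimageIso _).hom, ?_⟩
    simp [← F.map_comp_assoc, hφ]
  exists_map_comp_eq_zero {E j} φ hφ := by
    obtain ⟨i, a, ha⟩ := hX.exists_map_comp_eq_zero
      (F.preimage (φ ≫ (F.objObjPreimageIso _).inv)) (F.map_injective (by simp [reassoc_of% hφ]))
    refine ⟨i, a, ?_⟩
    simpa using congr(F.map $ha ≫ (F.objObjPreimageIso E).hom)

lemma exists_hom_comp [IsCofiltered J] {Y : J ⥤ C} {M : C} {e' : ∀ j, M ⟶ Y.obj j}
    (hY : IsProLimit Y e') (α : X ⟶ Y) (he : ∀ {i j} (a : i ⟶ j), e i ≫ X.map a = e j) :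
    ∃ u : L ⟶ M, ∀ j, u ≫ e' j = e j ≫ α.app j := by
  obtain ⟨j₀, φ₀, hφ₀⟩ := hY.exists_comp_eq (𝟙 M)
  refine ⟨e j₀ ≫ α.app j₀ ≫ φ₀, fun j => ?_⟩
  obtain ⟨l, a, b, hab⟩ := hY.exists_map_comp_eq (φ₀ ≫ e' j) (𝟙 _) (by simp [reassoc_of% hφ₀])
  calc (e j₀ ≫ α.app j₀ ≫ φ₀) ≫ e' j
      = e l ≫ α.app l ≫ Y.map a ≫ φ₀ ≫ e' j := by
        rw [← α.naturality_assoc, reassoc_of% he, Category.assoc, Category.assoc]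
    _ = e j ≫ α.app j := by rw [hab, Category.comp_id, ← α.naturality, reassoc_of% he]

end IsProLimit

section MittagLeffler

theorem Functor.IsMittagLeffler.nonempty_sections {F : ℕᵒᵖ ⥤ Type*} (hF : F.IsMittagLeffler)
    [∀ n, Nonempty (F.obj n)] : F.sections.Nonempty := by
  let d : F.toEventualRanges.WellOrderInductionData :=
    .ofExists (fun _ _ => F.surjective_toEventualRanges hF _)
      (fun _ hn => (Order.not_isSuccLimit_of_noMax hn).elim)
  have := F.toEventualRanges_nonempty hF (Opposite.op ⊥)
  obtain ⟨s, -⟩ := d.surjective (Classical.arbitrary _)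
  exact ⟨_, (F.toEventualRangesSectionsEquiv s).2⟩

variable {k : Type*} [Ring k]

theorem Subfunctor.isMittagLeffler_toFunctor_of_coset [IsCofiltered J] {M : J ⥤ ModuleCat k}
    [∀ j, IsArtinian k (M.obj j)]
    (K : ∀ j, Submodule k (M.obj j)) (hK : ∀ {i j} (f : i ⟶ j), K i ≤ (K j).comap (M.map f).hom)
    (P : Subfunctor (M ⋙ forget (ModuleCat k))) (hP : ∀ j, (P.obj j).Nonempty)
    (hsub : ∀ j x y, x ∈ P.obj j → y ∈ P.obj j → x - y ∈ K j)
    (hadd : ∀ j x v, x ∈ P.obj j → v ∈ K j → x + v ∈ P.obj j) :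
    P.toFunctor.IsMittagLeffler := by
  intro j
  -- `M j` is artinian, so some image of a `K i` in `M j` is minimal; since the images of the `P l`
  -- are cosets of images of the `K l`, the image of `P i` then lies in that of every `P l`
  obtain ⟨_, ⟨⟨i, f⟩, rfl⟩, hmin⟩ := wellFounded_lt.has_min
    (Set.range fun p : Σ i, i ⟶ j => (K p.1).map (M.map p.2).hom) ⟨_, ⟨⟨j, 𝟙 j⟩, rfl⟩⟩
  refine ⟨i, f, fun l g => ?_⟩
  rintro _ ⟨x, rfl⟩
  obtain ⟨m, a, b, hab⟩ := IsCofiltered.cospan f g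
  obtain ⟨t, ht⟩ := hP m
  have himage : (K m).map (M.map (a ≫ f)).hom = (K i).map (M.map f).hom := by
    refine eq_of_le_of_not_lt ?_ (hmin _ ⟨⟨m, a ≫ f⟩, rfl⟩)
    rw [M.map_comp, ModuleCat.hom_comp, Submodule.map_comp]
    exact Submodule.map_mono (Submodule.map_le_iff_le_comap.2 (hK a))
  obtain ⟨κ, hκ, hκx⟩ : (M.map f).hom (x.1 - (M.map a).hom t) ∈ (K m).map (M.map (a ≫ f)).hom :=
    himage ▸ ⟨_, hsub i _ _ x.2 (P.map a ht), rfl⟩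
  refine ⟨⟨(M.map b).hom (t + κ), P.map b (hadd _ _ _ ht hκ)⟩, Subtype.ext ?_⟩
  change (M.map g).hom ((M.map b).hom (t + κ)) = (M.map f).hom x.1
  rw [← ModuleCat.comp_apply, ← M.map_comp, ← hab, map_add, hκx, map_sub, M.map_comp,
    ModuleCat.comp_apply, add_sub_cancel]

theorem exists_compatible_of_mem_range {M : ℕᵒᵖ ⥤ ModuleCat k} [∀ j, IsArtinian k (M.obj j)]
    {N : ℕᵒᵖ → Type*} [∀ j, AddCommGroup (N j)] [∀ j, Module k (N j)]
    (Φ : ∀ j, M.obj j →ₗ[k] N j) (y : ∀ j, N j) (hy : ∀ j, y j ∈ LinearMap.range (Φ j))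
    (hy_map : ∀ {i j} (a : i ⟶ j) x, Φ i x = y i → Φ j ((M.map a).hom x) = y j)
    (hker_map : ∀ {i j} (a : i ⟶ j) x, Φ i x = 0 → Φ j ((M.map a).hom x) = 0) :
    ∃ x : ∀ j, M.obj j, (∀ {i j} (a : i ⟶ j), (M.map a).hom (x i) = x j) ∧
      ∀ j, Φ j (x j) = y j := by
  let P : Subfunctor (M ⋙ forget (ModuleCat k)) :=
    { obj j := Φ j ⁻¹' {y j}
      map a x hx := hy_map a x hx }
  have hP (j) : (P.obj j).Nonempty := by
    obtain ⟨x, hx⟩ := hy j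
    exact ⟨x, hx⟩
  have hML : P.toFunctor.IsMittagLeffler :=
    Subfunctor.isMittagLeffler_toFunctor_of_coset (fun j => LinearMap.ker (Φ j))
      (fun a x hx => hker_map a x hx) P hP
      (fun j x x' (hx : Φ j x = y j) (hx' : Φ j x' = y j) => show Φ j (x - x') = 0 by
        rw [map_sub, hx, hx', sub_self])
      (fun j x v (hx : Φ j x = y j) (hv : Φ j v = 0) => show Φ j (x + v) = y j by
        rw [map_add, hx, hv, add_zero])
  have : ∀ j, Nonempty (P.toFunctor.obj j) := fun j => (hP j).to_subtype
  obtain ⟨s, hs⟩ := hML.nonempty_sections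
  exact ⟨fun j => (s j).1, fun a => congrArg Subtype.val (hs a), fun j => (s j).2⟩

end MittagLeffler

section Triangulated

variable [HasZeroObject C] [HasShift C ℤ] [∀ n : ℤ, (CategoryTheory.shiftFunctor C n).Additive]
  [Pretriangulated C]

lemma Pretriangulated.Triangle.yoneda_exact₁ {T : Triangle C} (hT : T ∈ distTriang C) {D : C}
    (α : T.obj₁ ⟶ D) (hα : T.mor₃ ≫ α⟦(1 : ℤ)⟧' = 0) : ∃ β : T.obj₂ ⟶ D, α = T.mor₁ ≫ β := by
  obtain ⟨β, hβ, -⟩ := complete_distinguished_triangle_morphism₂ T (contractibleTriangle D) hT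
    (contractible_distinguished D) α 0 (hα.trans zero_comp.symm)
  exact ⟨β, (Category.comp_id α).symm.trans hβ.symm⟩

variable [IsCofiltered J] {T : J ⥤ Triangle C} {L : Triangle C} {e : ∀ j, L ⟶ T.obj j}

lemma exists_hom₂_comp_eq_of_distTriang (hT : ∀ j, T.obj j ∈ distTriang C) (hL : L ∈ distTriang C)
    (he : ∀ {i j} (a : i ⟶ j), e i ≫ T.map a = e j)
    (h₁ : IsProLimit (T ⋙ Triangle.π₁) fun j => (e j).hom₁)
    (h₃ : IsProLimit (T ⋙ Triangle.π₃) fun j => (e j).hom₃) {D : C} (ψ : L.obj₂ ⟶ D) :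
    ∃ j, ∃ φ : (T.obj j).obj₂ ⟶ D, (e j).hom₂ ≫ φ = ψ := by
  obtain ⟨j, α, hα⟩ : ∃ j, ∃ α : (T.obj j).obj₁ ⟶ D, (e j).hom₁ ≫ α = L.mor₁ ≫ ψ :=
    h₁.exists_comp_eq _
  obtain ⟨i, a, ha⟩ : ∃ i, ∃ a : i ⟶ j, (T.map a).hom₃ ≫ (T.obj j).mor₃ ≫ α⟦(1 : ℤ)⟧' = 0 :=
    h₃.exists_map_comp_eq_zero ((T.obj j).mor₃ ≫ α⟦(1 : ℤ)⟧') (by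
      change (e j).hom₃ ≫ (T.obj j).mor₃ ≫ α⟦(1 : ℤ)⟧' = 0
      rw [← (e j).comm₃_assoc, ← Functor.map_comp, hα, Functor.map_comp,
        comp_distTriang_mor_zero₃₁_assoc _ hL, zero_comp])
  obtain ⟨β, hβ⟩ := Triangle.yoneda_exact₁ (hT i) ((T.map a).hom₁ ≫ α) (by
    rw [Functor.map_comp, (T.map a).comm₃_assoc, ha])
  obtain ⟨ζ, hζ⟩ := Triangle.yoneda_exact₂ _ hL (ψ - (e i).hom₂ ≫ β) (by
    rw [Preadditive.comp_sub, (e i).comm₁_assoc, ← hβ, ← comp_hom₁_assoc, he, hα, sub_self])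
  obtain ⟨p, ρ, hρ⟩ : ∃ p, ∃ ρ : (T.obj p).obj₃ ⟶ D, (e p).hom₃ ≫ ρ = ζ :=
    h₃.exists_comp_eq ζ
  refine ⟨IsCofiltered.min i p, (T.map (IsCofiltered.minToLeft i p)).hom₂ ≫ β +
    (T.obj _).mor₂ ≫ (T.map (IsCofiltered.minToRight i p)).hom₃ ≫ ρ, ?_⟩
  rw [Preadditive.comp_add, ← comp_hom₂_assoc, he, ← (e _).comm₂_assoc, ← comp_hom₃_assoc, he,
    hρ, ← hζ, add_sub_cancel]

lemma exists_map_hom₂_comp_eq_zero_of_distTriang (hT : ∀ j, T.obj j ∈ distTriang C)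
    (hL : L ∈ distTriang C)
    (he : ∀ {i j} (a : i ⟶ j), e i ≫ T.map a = e j)
    (h₁ : IsProLimit (T ⋙ Triangle.π₁) fun j => (e j).hom₁)
    (h₃ : IsProLimit (T ⋙ Triangle.π₃) fun j => (e j).hom₃) {D : C} {j : J}
    (φ : (T.obj j).obj₂ ⟶ D) (hφ : (e j).hom₂ ≫ φ = 0) :
    ∃ i, ∃ a : i ⟶ j, (T.map a).hom₂ ≫ φ = 0 := by
  obtain ⟨m, a, ha⟩ : ∃ m, ∃ a : m ⟶ j, (T.map a).hom₁ ≫ (T.obj j).mor₁ ≫ φ = 0 :=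
    h₁.exists_map_comp_eq_zero ((T.obj j).mor₁ ≫ φ) (by
      change (e j).hom₁ ≫ (T.obj j).mor₁ ≫ φ = 0
      rw [← (e j).comm₁_assoc, hφ, comp_zero])
  obtain ⟨ε, hε⟩ := Triangle.yoneda_exact₂ _ (hT m) ((T.map a).hom₂ ≫ φ) (by
    rw [(T.map a).comm₁_assoc, ha])
  obtain ⟨θ, hθ⟩ := Triangle.yoneda_exact₃ _ hL ((e m).hom₃ ≫ ε) (by
    rw [(e m).comm₂_assoc, ← hε, ← comp_hom₂_assoc, he, hφ])
  obtain ⟨p, τ, hτ⟩ : ∃ p, ∃ τ : (T.obj p).obj₁⟦(1 : ℤ)⟧ ⟶ D, (e p).hom₁⟦(1 : ℤ)⟧' ≫ τ = θ :=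
    (h₁.map (shiftFunctor C (1 : ℤ))).exists_comp_eq θ
  obtain ⟨l, b, b', hb⟩ : ∃ l, ∃ b : l ⟶ m, ∃ b' : l ⟶ p,
      (T.map b).hom₃ ≫ ε = (T.map b').hom₃ ≫ (T.obj p).mor₃ ≫ τ :=
    h₃.exists_map_comp_eq ε ((T.obj p).mor₃ ≫ τ) (by
      change (e m).hom₃ ≫ ε = (e p).hom₃ ≫ (T.obj p).mor₃ ≫ τ
      rw [hθ, ← hτ, (e p).comm₃_assoc])
  refine ⟨l, b ≫ a, ?_⟩
  rw [T.map_comp, comp_hom₂_assoc, hε, ← (T.map b).comm₂_assoc, hb, ← (T.map b').comm₃_assoc,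
    comp_distTriang_mor_zero₂₃_assoc _ (hT l), zero_comp]

lemma isProLimit_π₂_of_distTriang (hT : ∀ j, T.obj j ∈ distTriang C) (hL : L ∈ distTriang C)
    (he : ∀ {i j} (a : i ⟶ j), e i ≫ T.map a = e j)
    (h₁ : IsProLimit (T ⋙ Triangle.π₁) fun j => (e j).hom₁)
    (h₃ : IsProLimit (T ⋙ Triangle.π₃) fun j => (e j).hom₃) :
    IsProLimit (T ⋙ Triangle.π₂) fun j => (e j).hom₂ where
  comp_map a := congrArg TriangleMorphism.hom₂ (he a)
  exists_comp_eq := exists_hom₂_comp_eq_of_distTriang hT hL he h₁ h₃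
  exists_map_comp_eq_zero := exists_map_hom₂_comp_eq_zero_of_distTriang hT hL he h₁ h₃

variable {k : Type*} [Ring k] [Linear k C]

lemma exists_compatible_homs_of_distTriang (hart : ∀ X Y : C, IsArtinian k (X ⟶ Y))
    {T : ℕᵒᵖ ⥤ Triangle C} (hT : ∀ j, T.obj j ∈ distTriang C) (hL : L ∈ distTriang C)
    (e₁ : ∀ j, L.obj₁ ⟶ (T.obj j).obj₁) (he₁ : ∀ {i j} (a : i ⟶ j), e₁ i ≫ (T.map a).hom₁ = e₁ j)
    (e₃ : ∀ j, L.obj₃ ⟶ (T.obj j).obj₃) (he₃ : ∀ {i j} (a : i ⟶ j), e₃ i ≫ (T.map a).hom₃ = e₃ j)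
    (h₃ : ∀ j, L.mor₃ ≫ (e₁ j)⟦(1 : ℤ)⟧' = e₃ j ≫ (T.obj j).mor₃) :
    ∃ e : ∀ j, L ⟶ T.obj j, (∀ {i j} (a : i ⟶ j), e i ≫ T.map a = e j) ∧
      ∀ j, (e j).hom₁ = e₁ j ∧ (e j).hom₃ = e₃ j := by
  let Φ (j) : (L.obj₂ ⟶ (T.obj j).obj₂) →ₗ[k]
      (L.obj₁ ⟶ (T.obj j).obj₂) × (L.obj₂ ⟶ (T.obj j).obj₃) :=
    (Linear.leftComp k _ L.mor₁).prod (Linear.rightComp k _ (T.obj j).mor₂)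
  have hΦ {j} (β : L.obj₂ ⟶ (T.obj j).obj₂) (z) :
      Φ j β = z ↔ L.mor₁ ≫ β = z.1 ∧ β ≫ (T.obj j).mor₂ = z.2 :=
    Prod.ext_iff
  have hΦ₀ {j} (β : L.obj₂ ⟶ (T.obj j).obj₂) :
      Φ j β = 0 ↔ L.mor₁ ≫ β = 0 ∧ β ≫ (T.obj j).mor₂ = 0 :=
    Prod.ext_iff
  let M : ℕᵒᵖ ⥤ ModuleCat k := T ⋙ Triangle.π₂ ⋙ (linearCoyoneda k C).obj (Opposite.op L.obj₂)
  have : ∀ j, IsArtinian k (M.obj j) := fun j => hart _ _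
  obtain ⟨β, hβ, hΦβ⟩ := exists_compatible_of_mem_range (M := M) Φ
    (fun j => (e₁ j ≫ (T.obj j).mor₁, L.mor₂ ≫ e₃ j))
    (fun j => by
      obtain ⟨β, hβ₁, hβ₂⟩ := complete_distinguished_triangle_morphism₂ L (T.obj j) hL (hT j)
        (e₁ j) (e₃ j) (h₃ j)
      exact ⟨β, (hΦ β _).mpr ⟨hβ₁, hβ₂.symm⟩⟩)
    (fun {i j} a (β : L.obj₂ ⟶ (T.obj i).obj₂) hβ => by
      obtain ⟨hβ₁, hβ₂⟩ := (hΦ β _).mp hβ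
      refine (hΦ (β ≫ (T.map a).hom₂) _).mpr ⟨?_, ?_⟩
      · rw [reassoc_of% hβ₁, (T.map a).comm₁, reassoc_of% (he₁ a)]
      · rw [Category.assoc, ← (T.map a).comm₂, reassoc_of% hβ₂, he₃])
    (fun {i j} a (β : L.obj₂ ⟶ (T.obj i).obj₂) hβ => by
      obtain ⟨hβ₁, hβ₂⟩ := (hΦ₀ β).mp hβ
      refine (hΦ₀ (β ≫ (T.map a).hom₂)).mpr ⟨?_, ?_⟩
      · rw [reassoc_of% hβ₁, zero_comp]
      · rw [Category.assoc, ← (T.map a).comm₂, reassoc_of% hβ₂, zero_comp])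
  refine ⟨fun j => Triangle.homMk L (T.obj j) (e₁ j) (β j) (e₃ j)
    ((hΦ _ _).mp (hΦβ j)).1 ((hΦ _ _).mp (hΦβ j)).2.symm (h₃ j),
    fun a => Triangle.hom_ext _ _ (he₁ a) (hβ a) (he₃ a), fun j => ⟨rfl, rfl⟩⟩

theorem exists_isProLimit_π₂_of_distTriang (hart : ∀ X Y : C, IsArtinian k (X ⟶ Y))
    {T : ℕᵒᵖ ⥤ Triangle C} (hT : ∀ j, T.obj j ∈ distTriang C)
    {LA : C} {eA : ∀ j, LA ⟶ (T.obj j).obj₁} (hA : IsProLimit (T ⋙ Triangle.π₁) eA)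
    {LZ : C} {eZ : ∀ j, LZ ⟶ (T.obj j).obj₃} (hZ : IsProLimit (T ⋙ Triangle.π₃) eZ) :
    ∃ (LB : C) (eB : ∀ j, LB ⟶ (T.obj j).obj₂), IsProLimit (T ⋙ Triangle.π₂) eB := by
  obtain ⟨hL, hhL⟩ : ∃ hL : LZ ⟶ LA⟦(1 : ℤ)⟧,
      ∀ j, hL ≫ (eA j)⟦(1 : ℤ)⟧' = eZ j ≫ (T.obj j).mor₃ :=
    (hA.map (shiftFunctor C (1 : ℤ))).exists_hom_comp (Functor.whiskerLeft T Triangle.π₃Toπ₁)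
      hZ.comp_map
  obtain ⟨LB, fL, gL, hTL⟩ := distinguished_cocone_triangle₂ hL
  obtain ⟨e, he, he₁₃⟩ :=
    exists_compatible_homs_of_distTriang hart hT hTL eA hA.comp_map eZ hZ.comp_map hhL
  have h₁ : (fun j => (e j).hom₁) = eA := funext fun j => (he₁₃ j).1
  have h₃ : (fun j => (e j).hom₃) = eZ := funext fun j => (he₁₃ j).2
  exact ⟨LB, _, isProLimit_π₂_of_distTriang hT hTL he (h₁ ▸ hA) (h₃ ▸ hZ)⟩

end Triangulated

end CategoryTheory

section Sequences

variable {C : Type u} [Category.{v} C]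

lemma transComp_eq_map (X : ℕ → C) (t : ∀ n, X (n + 1) ⟶ X n) (n k : ℕ) :
    transComp X t n k = (Functor.ofOpSequence t).map (homOfLE (Nat.le_add_right n k)).op := by
  induction k with
  | zero => exact ((Functor.ofOpSequence t).map_id _).symm
  | succ k ih =>
    have h := (Functor.ofOpSequence t).map_comp (homOfLE (Nat.le_add_right (n + k) 1)).op
      (homOfLE (Nat.le_add_right n k)).op
    rw [Functor.ofOpSequence_map_homOfLE_succ] at h
    exact (congrArg (t (n + k) ≫ ·) ih).trans h.symm

lemma isConstantPro_iff [Preadditive C] (X : ℕ → C) (t : ∀ n, X (n + 1) ⟶ X n) :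
    IsConstantPro X t ↔ ∃ (L : C) (e : ∀ j : ℕᵒᵖ, L ⟶ X j.unop),
      IsProLimit (Functor.ofOpSequence t) e := by
  constructor
  · rintro ⟨L, e, he, hsurj, hinj⟩
    let π : (Functor.const ℕᵒᵖ).obj L ⟶ Functor.ofOpSequence t :=
      NatTrans.ofOpSequence e fun n => by
        simp only [Functor.const_obj_map, Functor.ofOpSequence_map_homOfLE_succ]
        exact (Category.id_comp _).trans (he n).symm
    refine ⟨L, π.app, ⟨fun a => by simpa using (π.naturality a).symm, fun ψ => ?_, ?_⟩⟩
    · obtain ⟨n, φ, hφ⟩ := hsurj _ ψ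
      exact ⟨Opposite.op n, φ, hφ⟩
    · rintro D ⟨n⟩ φ hφ
      obtain ⟨k, hk⟩ := hinj D n φ 0 (hφ.trans comp_zero.symm)
      refine ⟨Opposite.op (n + k), (homOfLE (Nat.le_add_right n k)).op, ?_⟩
      have := hk.trans comp_zero
      rwa [transComp_eq_map] at this
  · rintro ⟨L, e, hL⟩
    refine ⟨L, fun n => e (Opposite.op n), fun n => ?_, fun D ψ => ?_, fun D n φ φ' h => ?_⟩
    · have := hL.comp_map (homOfLE (Nat.le_add_right n 1)).op
      rwa [Functor.ofOpSequence_map_homOfLE_succ] at this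
    · obtain ⟨⟨n⟩, φ, hφ⟩ := hL.exists_comp_eq ψ
      exact ⟨n, φ, hφ⟩
    · obtain ⟨⟨m⟩, a, ha⟩ := hL.exists_map_comp_eq_zero (j := Opposite.op n) (φ - φ') (by
        change e (Opposite.op n) ≫ (φ - φ') = 0
        rw [Preadditive.comp_sub, sub_eq_zero]
        exact h)
      obtain ⟨k, rfl⟩ := Nat.exists_eq_add_of_le (leOfHom a.unop)
      refine ⟨k, ?_⟩
      rw [← sub_eq_zero, ← Preadditive.comp_sub, transComp_eq_map]
      exact ha

end Sequences

/-- Let `C` be a triangulated category linear over a field `k` with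
finite-dimensional morphism spaces, and let `(A n → B n → Z n → A n⟦1⟧)` be an inverse
system of distinguished triangles.  If the inverse systems `(A n)` and `(Z n)` are
constant as pro-objects, then so is `(B n)`. -/
theorem statement1 (k : Type w) [Field k]
    {C : Type u} [Category.{v} C] [Preadditive C] [Linear k C]
    [HasZeroObject C] [HasShift C ℤ] [∀ n : ℤ, (shiftFunctor C n).Additive]
    [Pretriangulated C]
    (hfin : ∀ X Y : C, FiniteDimensional k (X ⟶ Y))
    (A B Z : ℕ → C)
    (f : ∀ n, A n ⟶ B n) (g : ∀ n, B n ⟶ Z n) (h : ∀ n, Z n ⟶ (A n)⟦(1 : ℤ)⟧)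
    (hdist : ∀ n, Triangle.mk (f n) (g n) (h n) ∈ distTriang C)
    (a : ∀ n, A (n + 1) ⟶ A n) (b : ∀ n, B (n + 1) ⟶ B n) (c : ∀ n, Z (n + 1) ⟶ Z n)
    (hsq₁ : ∀ n, f (n + 1) ≫ b n = a n ≫ f n)
    (hsq₂ : ∀ n, g (n + 1) ≫ c n = b n ≫ g n)
    (hsq₃ : ∀ n, h (n + 1) ≫ (a n)⟦(1 : ℤ)⟧' = c n ≫ h n)
    (hA : IsConstantPro A a) (hZ : IsConstantPro Z c) :
    IsConstantPro B b := by
  obtain ⟨LA, eA, hA⟩ := (isConstantPro_iff A a).mp hA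
  obtain ⟨LZ, eZ, hZ⟩ := (isConstantPro_iff Z c).mp hZ
  let T : ℕᵒᵖ ⥤ Triangle C := Triangle.functorMk (obj₁ := Functor.ofOpSequence a)
    (obj₂ := Functor.ofOpSequence b) (obj₃ := Functor.ofOpSequence c)
    (NatTrans.ofOpSequence f fun n => by
      rw [Functor.ofOpSequence_map_homOfLE_succ, Functor.ofOpSequence_map_homOfLE_succ]
      exact (hsq₁ n).symm)
    (NatTrans.ofOpSequence g fun n => by
      rw [Functor.ofOpSequence_map_homOfLE_succ, Functor.ofOpSequence_map_homOfLE_succ]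
      exact (hsq₂ n).symm)
    (NatTrans.ofOpSequence h fun n => by
      rw [Functor.comp_map, Functor.ofOpSequence_map_homOfLE_succ,
        Functor.ofOpSequence_map_homOfLE_succ]
      exact (hsq₃ n).symm)
  obtain ⟨LB, eB, hB⟩ := exists_isProLimit_π₂_of_distTriang (k := k)
    (fun X Y => have := hfin X Y; inferInstance) (T := T) (fun j => hdist j.unop) hA hZ
  exact (isConstantPro_iff B b).mpr ⟨LB, eB, hB⟩
end

section
/- For every ε ∈ (−1/2, 1/2) and all partitions p, p′ ∈ 𝒫(n) with p′ ≤ p in the dominance order, one has |v_ε(p)| ≤ |v_ε(p′)|; that is, the map v_ε : 𝒫(n) → (ε+ℤ)ⁿ₊ is order-reversing with respect to dominance order and Euclidean norm. -/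
open Finset

/-- A partition of `N`: an antitone function `ℕ → ℕ` (the 0-indexed parts, padded with
zeros) supported on `{0, …, N-1}` whose parts sum to `N`. -/
def IsPartition (N : ℕ) (p : ℕ → ℕ) : Prop :=
  Antitone p ∧ (∀ i, N ≤ i → p i = 0) ∧ ∑ i ∈ Finset.range N, p i = N

/-- Dominance order: `Dominates p q` means `q ≤ p`, i.e. every partial sum of the parts
of `q` is at most the corresponding partial sum of the parts of `p`. -/
def Dominates (p q : ℕ → ℕ) : Prop :=
  ∀ j, ∑ i ∈ Finset.range j, q i ≤ ∑ i ∈ Finset.range j, p i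

/-- Multiplicity of the value `k` among the first `N` parts of `p`. -/
def mult (N : ℕ) (p : ℕ → ℕ) (k : ℕ) : ℕ :=
  ((Finset.range N).filter (fun i => p i = k)).card

/-- Multiplicity of the real value `s` among the entries of the tuple `v`. -/
noncomputable def multR {n : ℕ} (v : Fin n → ℝ) (s : ℝ) : ℕ :=
  {i : Fin n | v i = s}.ncard

/-- Euclidean norm of a real tuple. -/
noncomputable def enormR {n : ℕ} (v : Fin n → ℝ) : ℝ :=
  Real.sqrt (∑ i, (v i) ^ 2)

/-- `IsVEps n ε p w` says that the weakly decreasing tuple `w : Fin n → ℝ` is `v_ε(p)`: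
its entries lie in `ε + ℤ`, `ε` occurs with multiplicity `p 0 = μ₀`, and for `k ≥ 1`
(writing the parts of `p` as `[μ₀, μ₁, μ₁', μ₂, μ₂', …]`, so `μ_k = p (2k-1)` and
`μ_k' = p (2k)`), if `ε ≥ 0` then `ε - k` occurs `μ_k` times and `ε + k` occurs `μ_k'`
times, while if `ε < 0` then `ε + k` occurs `μ_k` times and `ε - k` occurs `μ_k'` times. -/
def IsVEps (n : ℕ) (ε : ℝ) (p : ℕ → ℕ) (w : Fin n → ℝ) : Prop :=
  Antitone w ∧ (∀ i, ∃ k : ℤ, w i = ε + (k : ℝ)) ∧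
  multR w ε = p 0 ∧
  ∀ k : ℕ, 1 ≤ k →
    ((0 ≤ ε → multR w (ε - (k : ℝ)) = p (2 * k - 1) ∧ multR w (ε + (k : ℝ)) = p (2 * k)) ∧
     (ε < 0 → multR w (ε + (k : ℝ)) = p (2 * k - 1) ∧ multR w (ε - (k : ℝ)) = p (2 * k)))

/-!
List `ε + ℤ` as `ε, ε ∓ 1, ε ± 1, ε ∓ 2, ε ± 2, …`, the first step pointing towards `0`. The
entry with index `j` occurs `p j` times in `v_ε(p)`, and when `|ε| ≤ 1/2` the squares `c j` of
these entries increase with `j`. Hence `|v_ε(p)|² = ∑ⱼ p j · c j`, and by Abel summation this can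
only grow when `p` is replaced by a partition with the same total and smaller partial sums.
-/

theorem sum_mul_le_sum_mul_of_partial_sums_le {R : Type*} [CommRing R] [LinearOrder R]
    [IsStrictOrderedRing R] {a b c : ℕ → R} (hc : Monotone c)
    (hab : ∀ m, ∑ j ∈ range m, b j ≤ ∑ j ∈ range m, a j) {N : ℕ}
    (htot : ∑ j ∈ range N, a j = ∑ j ∈ range N, b j) :
    ∑ j ∈ range N, a j * c j ≤ ∑ j ∈ range N, b j * c j := by
  have hd : ∀ m, ∑ j ∈ range m, (b j - a j) ≤ 0 := fun m => by
    rw [sum_sub_distrib]; exact sub_nonpos.2 (hab m)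
  have key : ∀ M, (∑ j ∈ range M, (b j - a j)) * c M ≤ ∑ j ∈ range M, (b j - a j) * c j := by
    intro M
    induction M with
    | zero => simp
    | succ M ih =>
      have hstep := mul_le_mul_of_nonpos_left (hc M.le_succ) (hd (M + 1))
      simp only [sum_range_succ] at hstep ⊢
      linarith
  have := key N
  rw [sum_sub_distrib, htot, sub_self, zero_mul] at this
  simpa only [sub_mul, sum_sub_distrib, sub_nonneg] using this

theorem intEquivNat_symm_two_mul (k : ℕ) : Equiv.intEquivNat.symm (2 * k) = k := by
  rw [Equiv.symm_apply_eq]; rfl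

theorem intEquivNat_symm_two_mul_add_one (k : ℕ) :
    Equiv.intEquivNat.symm (2 * k + 1) = -(k + 1 : ℤ) := by
  rw [Equiv.symm_apply_eq]; rfl

theorem monotone_sq_add_intEquivNat_symm {t : ℝ} (ht₀ : 0 ≤ t) (ht : t ≤ 1 / 2) :
    Monotone fun j => (t + Equiv.intEquivNat.symm j) ^ 2 := by
  refine monotone_nat_of_le_succ fun j => ?_
  obtain ⟨k, rfl | rfl⟩ := Nat.even_or_odd' j
  · rw [intEquivNat_symm_two_mul, intEquivNat_symm_two_mul_add_one]
    push_cast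
    nlinarith [mul_nonneg (sub_nonneg.2 ht) (Nat.cast_nonneg (α := ℝ) k)]
  · rw [show 2 * k + 1 + 1 = 2 * (k + 1) by ring, intEquivNat_symm_two_mul,
      intEquivNat_symm_two_mul_add_one]
    push_cast
    nlinarith [mul_nonneg ht₀ (Nat.cast_nonneg (α := ℝ) k)]

/-- `Equiv.intEquivNat.symm` enumerates `ℤ` as `0, -1, 1, -2, 2, …`, so `partValue ε j` is the
value of `v_ε(p)` that occurs `p j` times. -/
noncomputable def partValue (ε : ℝ) (j : ℕ) : ℝ :=
  if 0 ≤ ε then ε + Equiv.intEquivNat.symm j else ε - Equiv.intEquivNat.symm j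

theorem partValue_two_mul (ε : ℝ) (k : ℕ) :
    partValue ε (2 * k) = if 0 ≤ ε then ε + k else ε - k := by
  simp only [partValue, intEquivNat_symm_two_mul, Int.cast_natCast]

theorem partValue_zero (ε : ℝ) : partValue ε 0 = ε := by
  simpa using partValue_two_mul ε 0

theorem partValue_two_mul_add_one (ε : ℝ) (k : ℕ) :
    partValue ε (2 * k + 1) = if 0 ≤ ε then ε - (k + 1 : ℕ) else ε + (k + 1 : ℕ) := by
  simp only [partValue, intEquivNat_symm_two_mul_add_one]
  push_cast
  split_ifs <;> ring

theorem partValue_injective (ε : ℝ) : Function.Injective (partValue ε) := by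
  intro a b h
  have : (Equiv.intEquivNat.symm a : ℝ) = Equiv.intEquivNat.symm b := by
    unfold partValue at h
    split_ifs at h <;> linarith
  exact Equiv.intEquivNat.symm.injective (by exact_mod_cast this)

theorem partValue_sq (ε : ℝ) (j : ℕ) :
    partValue ε j ^ 2 = (|ε| + Equiv.intEquivNat.symm j) ^ 2 := by
  unfold partValue
  split_ifs with h
  · rw [abs_of_nonneg h]
  · rw [abs_of_neg (not_le.mp h)]; ring

theorem monotone_partValue_sq {ε : ℝ} (hε : |ε| ≤ 1 / 2) :
    Monotone fun j => partValue ε j ^ 2 := by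
  simpa only [partValue_sq] using monotone_sq_add_intEquivNat_symm (abs_nonneg ε) hε

theorem multR_eq_card {n : ℕ} (v : Fin n → ℝ) (s : ℝ) :
    multR v s = #{i | v i = s} := by
  rw [multR, ← Set.ncard_coe_finset]
  congr 1
  ext i
  simp

namespace IsVEps

variable {n : ℕ} {ε : ℝ} {p : ℕ → ℕ} {w : Fin n → ℝ}

theorem multR_partValue (hw : IsVEps n ε p w) (j : ℕ) : multR w (partValue ε j) = p j := by
  obtain ⟨k, rfl | rfl⟩ := Nat.even_or_odd' j
  · rcases k with _ | k
    · simpa [partValue_zero] using hw.2.2.1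
    · have hk := hw.2.2.2 (k + 1) (by omega)
      rw [partValue_two_mul]
      split_ifs with hε
      · exact (hk.1 hε).2
      · exact (hk.2 (not_le.mp hε)).2
  · have hk := hw.2.2.2 (k + 1) (by omega)
    rw [show 2 * (k + 1) - 1 = 2 * k + 1 by omega] at hk
    rw [partValue_two_mul_add_one]
    split_ifs with hε
    · exact (hk.1 hε).1
    · exact (hk.2 (not_le.mp hε)).1

theorem exists_partValue (hw : IsVEps n ε p w) (i : Fin n) : ∃ j, w i = partValue ε j := by
  obtain ⟨m, hm⟩ := hw.2.1 i
  refine ⟨Equiv.intEquivNat (if 0 ≤ ε then m else -m), ?_⟩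
  unfold partValue
  split_ifs <;> simp [hm]

theorem lt_of_eq_partValue (hw : IsVEps n ε p w) (hsupp : ∀ i, n ≤ i → p i = 0) {i : Fin n}
    {j : ℕ} (h : w i = partValue ε j) : j < n := by
  by_contra! hj
  have hpos : 0 < multR w (partValue ε j) := (Set.ncard_pos (Set.toFinite _)).2 ⟨i, h⟩
  rw [hw.multR_partValue, hsupp j hj] at hpos
  exact lt_irrefl 0 hpos

theorem sum_sq (hw : IsVEps n ε p w) (hsupp : ∀ i, n ≤ i → p i = 0) :
    ∑ i, w i ^ 2 = ∑ j ∈ range n, (p j : ℝ) * partValue ε j ^ 2 := by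
  choose g hg using hw.exists_partValue
  have hg_lt : ∀ i ∈ univ, g i ∈ range n := fun i _ =>
    mem_range.2 (hw.lt_of_eq_partValue hsupp (hg i))
  rw [← sum_fiberwise_of_maps_to hg_lt]
  refine sum_congr rfl fun j _ => ?_
  have hfiber : ∀ i ∈ ({i | g i = j} : Finset (Fin n)), w i ^ 2 = partValue ε j ^ 2 :=
    fun i hi => by rw [hg i, (mem_filter.1 hi).2]
  have hcard : #{i | g i = j} = p j := by
    rw [← hw.multR_partValue j, multR_eq_card]
    congr 1
    ext i
    simp only [mem_filter, mem_univ, true_and, hg i, (partValue_injective ε).eq_iff]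
  rw [sum_congr rfl hfiber, sum_const, nsmul_eq_mul, hcard]

end IsVEps

theorem statement2_general (n : ℕ) (ε : ℝ)
    (hε₁ : -(1 / 2 : ℝ) < ε) (hε₂ : ε < 1 / 2)
    (p p' : ℕ → ℕ) (hp : IsPartition n p) (hp' : IsPartition n p')
    (hdom : Dominates p p')
    (w w' : Fin n → ℝ) (hw : IsVEps n ε p w) (hw' : IsVEps n ε p' w') :
    enormR w ≤ enormR w' := by
  refine Real.sqrt_le_sqrt ?_
  rw [hw.sum_sq hp.2.1, hw'.sum_sq hp'.2.1]
  refine sum_mul_le_sum_mul_of_partial_sums_le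
    (monotone_partValue_sq (abs_le.2 ⟨hε₁.le, hε₂.le⟩)) (fun m => ?_) ?_
  · exact_mod_cast hdom m
  · exact_mod_cast hp.2.2.trans hp'.2.2.symm

/-- For every `ε ∈ (−1/2, 1/2)`, the map `v_ε : 𝒫(n) → (ε+ℤ)ⁿ₊` is
order-reversing: if `p′ ≤ p` in the dominance order then `|v_ε(p)| ≤ |v_ε(p′)|`. -/
theorem statement2 (n : ℕ) (hn : 1 ≤ n) (ε : ℝ)
    (hε₁ : -(1 / 2 : ℝ) < ε) (hε₂ : ε < 1 / 2)
    (p p' : ℕ → ℕ) (hp : IsPartition n p) (hp' : IsPartition n p')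
    (hdom : Dominates p p')
    (w w' : Fin n → ℝ) (hw : IsVEps n ε p w) (hw' : IsVEps n ε p' w') :
    enormR w ≤ enormR w' :=
  statement2_general n ε hε₁ hε₂ p p' hp hp' hdom w w' hw hw'
end

section
/- Suppose p ∈ 𝒫**(2n), p′ ∈ 𝒫*(2n), and p′ ≤ p in the dominance order. Then |v_ℤ(p)| ≤ |v_ℤ(p′)|. -/
open Finset

/-- Multiplicity of the value `k` among the entries of a tuple of naturals. -/
def multN {n : ℕ} (v : Fin n → ℕ) (k : ℕ) : ℕ :=
  (Finset.univ.filter (fun i => v i = k)).card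

/-- Euclidean norm of a tuple of naturals. -/
noncomputable def enormN {n : ℕ} (v : Fin n → ℕ) : ℝ :=
  Real.sqrt (∑ i, ((v i : ℝ)) ^ 2)

/-- `IsPStar n p μ₀ μ` says that `p ∈ 𝒫*(2n)` with decomposition data `(μ₀; μ₁, μ₂, …)`:
`p` is a partition of `2n` whose multiset of parts is the union of the doubled partition
`[μ₁, μ₁, μ₂, μ₂, …]` and a single even part `2μ₀` (omitted if `μ₀ = 0`).  Equivalently,
for each `k ≥ 1` the multiplicity of `k` in `p` equals twice its multiplicity in `μ`, plus
one if `k = 2μ₀`. -/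
def IsPStar (n : ℕ) (p : ℕ → ℕ) (μ₀ : ℕ) (μ : ℕ → ℕ) : Prop :=
  IsPartition (2 * n) p ∧ Antitone μ ∧ (∀ i, n ≤ i → μ i = 0) ∧
  ∀ k, 1 ≤ k → mult (2 * n) p k = 2 * mult n μ k + (if k = 2 * μ₀ then 1 else 0)

/-- `IsVZ n μ₀ μ w` says that the weakly decreasing tuple `w : Fin n → ℕ` is `v_ℤ(p)` for
`p ∈ 𝒫*(2n)` with decomposition data `(μ₀; μ₁, μ₂, …)`: it has `μ₀` entries equal to `0`
and `μ_k` entries equal to `k` for each `k ≥ 1`. -/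
def IsVZ (n : ℕ) (μ₀ : ℕ) (μ : ℕ → ℕ) (w : Fin n → ℕ) : Prop :=
  Antitone w ∧ multN w 0 = μ₀ ∧ ∀ k, 1 ≤ k → multN w k = μ (k - 1)

/-
Conjugation of partitions reverses the dominance order, and for `p ∈ 𝒫*(2n)` with data
`(μ₀; μ)` the conjugate is `p^T_j = 2 μ^T_j + [j < 2μ₀]`. The condition `2μ₀ ≥ μ₁` bounds every
part of `p` by `2μ₀`, while `2μ₀'` is a part of `p'`; as `p'₁ ≤ p₁` this gives `μ₀' ≤ μ₀`, hence
every partial sum of `μ^T` is at most the corresponding one of `μ'^T`. On the other hand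
`|v_ℤ(p)|² = ∑ₖ μₖ k² = ∑_j (1² + ⋯ + (μ^T_j)²)`, and since `m ↦ 1² + ⋯ + m²` is increasing and
convex, summation by parts against the antitone weights `(μ^T_j + 1)²` turns the partial-sum
inequalities into `|v_ℤ(p)|² ≤ |v_ℤ(p')|²`.
-/

-- The `(j+1)`-st part of the conjugate of the partition `(q 0, …, q (N-1))`.
def conjugate (N : ℕ) (q : ℕ → ℕ) (j : ℕ) : ℕ := #{i ∈ range N | j < q i}

theorem Finset.eq_range_card_of_isLowerSet {s : Finset ℕ} (hs : IsLowerSet (s : Set ℕ)) :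
    s = range #s := by
  ext i
  rw [mem_range]
  constructor
  · intro hi
    have hsub : range (i + 1) ⊆ s := fun k hk => hs (Nat.le_of_lt_succ (mem_range.1 hk)) hi
    simpa using card_le_card hsub
  · intro hi
    by_contra his
    have hsub : s ⊆ range i := fun k hk => mem_range.2 (lt_of_not_ge fun hik => his (hs hik hk))
    have := card_le_card hsub
    rw [card_range] at this
    omega

theorem card_filter_range_lt (a m : ℕ) : #{j ∈ range m | j < a} = min a m := by
  rw [show {j ∈ range m | j < a} = range (min a m) by ext; simp; omega, card_range]

section Conjugate

variable {N : ℕ} {q : ℕ → ℕ}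

theorem conjugate_le (j : ℕ) : conjugate N q j ≤ N :=
  (card_filter_le _ _).trans (card_range N).le

theorem antitone_conjugate : Antitone (conjugate N q) :=
  fun _ _ hij => card_le_card (monotone_filter_right _ fun _ _ => hij.trans_lt)

theorem filter_range_lt_eq_range_conjugate (hq : Antitone q) (j : ℕ) :
    {i ∈ range N | j < q i} = range (conjugate N q j) :=
  eq_range_card_of_isLowerSet fun a b hba ha => by
    simp only [coe_filter, mem_range, Set.mem_ofPred_eq] at ha ⊢
    exact ⟨hba.trans_lt ha.1, ha.2.trans_le (hq hba)⟩

theorem sum_range_conjugate (m : ℕ) :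
    ∑ j ∈ range m, conjugate N q j = ∑ i ∈ range N, min (q i) m := by
  simp only [conjugate, card_filter]
  rw [sum_comm]
  refine sum_congr rfl fun i _ => ?_
  rw [← card_filter, card_filter_range_lt]

theorem sum_range_mul_eq_sum_sum_conjugate {M : ℕ} (hq : Antitone q) (hM : ∀ i ∈ range N, q i ≤ M)
    (f : ℕ → ℕ) :
    ∑ i ∈ range N, q i * f i = ∑ j ∈ range M, ∑ i ∈ range (conjugate N q j), f i :=
  calc ∑ i ∈ range N, q i * f i = ∑ i ∈ range N, ∑ j ∈ range M, if j < q i then f i else 0 :=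
        sum_congr rfl fun i hi => by
          rw [← sum_filter, sum_const, card_filter_range_lt, min_eq_left (hM i hi), smul_eq_mul]
    _ = ∑ j ∈ range M, ∑ i ∈ range N, if j < q i then f i else 0 := sum_comm
    _ = _ := sum_congr rfl fun j _ => by rw [← sum_filter, filter_range_lt_eq_range_conjugate hq]

theorem sum_range_min_add_sum_range_le {c : ℕ} (hc : c ≤ N) (m : ℕ) :
    ∑ i ∈ range N, min (q i) m + ∑ i ∈ range c, q i ≤ c * m + ∑ i ∈ range N, q i := by
  rw [← sum_range_add_sum_Ico _ hc, ← sum_range_add_sum_Ico q hc]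
  have hlow : ∑ i ∈ range c, min (q i) m ≤ c * m := by
    simpa using sum_le_card_nsmul (range c) _ m fun i _ => min_le_right (q i) m
  have hhigh : ∑ i ∈ Ico c N, min (q i) m ≤ ∑ i ∈ Ico c N, q i :=
    sum_le_sum fun i _ => min_le_left _ _
  omega

theorem sum_range_min_add_sum_range_conjugate (hq : Antitone q) (m : ℕ) :
    ∑ i ∈ range N, min (q i) m + ∑ i ∈ range (conjugate N q m), q i
      = conjugate N q m * m + ∑ i ∈ range N, q i := by
  have hc : conjugate N q m ≤ N := conjugate_le m
  have hmem : ∀ i < N, (i < conjugate N q m ↔ m < q i) := fun i hi => by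
    rw [← mem_range, ← filter_range_lt_eq_range_conjugate hq, mem_filter, mem_range]
    exact and_iff_right hi
  rw [← sum_range_add_sum_Ico _ hc, ← sum_range_add_sum_Ico q hc]
  have hlow : ∑ i ∈ range (conjugate N q m), min (q i) m = conjugate N q m * m := by
    rw [sum_congr rfl fun i hi => min_eq_right ((hmem i ((mem_range.1 hi).trans_le hc)).1
      (mem_range.1 hi)).le]
    simp
  have hhigh : ∑ i ∈ Ico (conjugate N q m) N, min (q i) m = ∑ i ∈ Ico (conjugate N q m) N, q i :=
    sum_congr rfl fun i hi => min_eq_left <| by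
      rw [mem_Ico] at hi
      exact not_lt.1 fun h => (hmem i hi.2).2 h |>.not_ge hi.1
  omega

theorem conjugate_eq_sum_mult {T : Finset ℕ} (hT : ∀ i ∈ range N, q i ∈ T) (j : ℕ) :
    conjugate N q j = ∑ t ∈ T with j < t, mult N q t := by
  rw [conjugate, card_eq_sum_card_fiberwise (f := q) (t := {t ∈ T | j < t})]
  · refine sum_congr rfl fun t ht => ?_
    rw [mult, filter_filter]
    congr 1
    have hjt := (mem_filter.1 ht).2
    exact filter_congr fun i _ => ⟨And.right, fun hi => ⟨hi ▸ hjt, hi⟩⟩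
  · intro i hi
    simp only [coe_filter, mem_range, Set.mem_ofPred_eq] at hi ⊢
    exact ⟨hT i (mem_range.2 hi.1), hi.2⟩

end Conjugate

theorem Dominates.sum_range_conjugate_le {N : ℕ} {p p' : ℕ → ℕ} (hdom : Dominates p p')
    (hp' : Antitone p') (hsum : ∑ i ∈ range N, p i = ∑ i ∈ range N, p' i) (m : ℕ) :
    ∑ j ∈ range m, conjugate N p j ≤ ∑ j ∈ range m, conjugate N p' j := by
  rw [sum_range_conjugate, sum_range_conjugate]
  have := sum_range_min_add_sum_range_le (q := p) (conjugate_le (N := N) (q := p') m) m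
  have := sum_range_min_add_sum_range_conjugate (N := N) hp' m
  have := hdom (conjugate N p' m)
  omega

theorem sub_mul_le_sum_range_sub {R : Type*} [CommRing R] [LinearOrder R] [IsStrictOrderedRing R]
    {f : ℕ → R} (hf : Monotone f) (a b : ℕ) :
    ((b : R) - a) * f a ≤ ∑ k ∈ range b, f k - ∑ k ∈ range a, f k := by
  rcases le_total a b with hab | hba
  · have := card_nsmul_le_sum (Ico a b) f (f a) fun k hk => hf (mem_Ico.1 hk).1
    rwa [Nat.card_Ico, nsmul_eq_mul, Nat.cast_sub hab, sum_Ico_eq_sub _ hab] at this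
  · have := sum_le_card_nsmul (Ico b a) f (f a) fun k hk => hf (mem_Ico.1 hk).2.le
    rw [Nat.card_Ico, nsmul_eq_mul, Nat.cast_sub hba, sum_Ico_eq_sub _ hba] at this
    linarith

theorem sum_range_mul_nonneg_of_antitone {R : Type*} [CommRing R] [LinearOrder R]
    [IsStrictOrderedRing R] {a d : ℕ → R} (ha : Antitone a) (ha0 : ∀ j, 0 ≤ a j)
    (hd : ∀ m, 0 ≤ ∑ j ∈ range m, d j) (M : ℕ) : 0 ≤ ∑ j ∈ range M, a j * d j := by
  have hparts := sum_range_by_parts a d M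
  simp only [smul_eq_mul] at hparts
  have hlast := mul_nonneg (ha0 (M - 1)) (hd M)
  have hrest : ∑ i ∈ range (M - 1), (a (i + 1) - a i) * ∑ j ∈ range (i + 1), d j ≤ 0 :=
    sum_nonpos fun i _ => mul_nonpos_of_nonpos_of_nonneg (sub_nonpos.2 (ha i.le_succ)) (hd _)
  linarith

theorem sum_sum_range_le_of_sum_range_le {a b : ℕ → ℕ} (ha : Antitone a)
    (hab : ∀ m, ∑ j ∈ range m, a j ≤ ∑ j ∈ range m, b j) {f : ℕ → ℕ} (hf : Monotone f) (M : ℕ) :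
    ∑ j ∈ range M, ∑ k ∈ range (a j), f k ≤ ∑ j ∈ range M, ∑ k ∈ range (b j), f k := by
  have hfZ : Monotone fun k => (f k : ℤ) := fun _ _ h => Int.ofNat_le.2 (hf h)
  have hstep := sum_le_sum fun j (_ : j ∈ range M) => sub_mul_le_sum_range_sub hfZ (a j) (b j)
  have habel : 0 ≤ ∑ j ∈ range M, (f (a j) : ℤ) * ((b j : ℤ) - a j) :=
    sum_range_mul_nonneg_of_antitone (fun _ _ h => hfZ (ha h)) (fun _ => by positivity)
      (fun m => by rw [sum_sub_distrib, sub_nonneg]; exact_mod_cast hab m) M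
  simp only [mul_comm ((f _ : ℤ))] at habel
  rw [sum_sub_distrib] at hstep
  zify
  linarith

namespace IsPStar

variable {n μ₀ : ℕ} {p μ : ℕ → ℕ}

theorem conjugate_eq (h : IsPStar n p μ₀ μ) (j : ℕ) :
    conjugate (2 * n) p j = 2 * conjugate n μ j + if j < 2 * μ₀ then 1 else 0 := by
  set T := (range (2 * n)).image p ∪ (range n).image μ ∪ {2 * μ₀}
  have hpT : ∀ i ∈ range (2 * n), p i ∈ T :=
    fun i hi => mem_union_left _ (mem_union_left _ (mem_image_of_mem p hi))
  have hμT : ∀ i ∈ range n, μ i ∈ T :=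
    fun i hi => mem_union_left _ (mem_union_right _ (mem_image_of_mem μ hi))
  rw [conjugate_eq_sum_mult hpT, conjugate_eq_sum_mult hμT,
    sum_congr rfl fun t ht => h.2.2.2 t (by have := (mem_filter.1 ht).2; omega),
    sum_add_distrib, ← mul_sum, sum_ite_eq']
  simp [T]

theorem two_mul_le_apply_zero (h : IsPStar n p μ₀ μ) (hμ₀ : 0 < μ₀) : 2 * μ₀ ≤ p 0 := by
  have hpos : 0 < conjugate (2 * n) p (2 * μ₀ - 1) := by
    rw [h.conjugate_eq, if_pos (by omega)]
    omega
  obtain ⟨i, hi⟩ := card_pos.1 hpos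
  have := h.1.1 i.zero_le
  have := (mem_filter.1 hi).2
  omega

theorem apply_zero_le (h : IsPStar n p μ₀ μ) (hμ : μ 0 ≤ 2 * μ₀) : p 0 ≤ 2 * μ₀ := by
  have hμ0 : conjugate n μ (2 * μ₀) = 0 :=
    card_eq_zero.2 <| filter_eq_empty_iff.2 fun k _ => (h.2.1 k.zero_le).trans hμ |>.not_gt
  have hp0 : conjugate (2 * n) p (2 * μ₀) = 0 := by rw [h.conjugate_eq, hμ0]; simp
  by_contra! hlt
  have hn : 0 < 2 * n := Nat.pos_of_ne_zero fun h0 => by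
    have := h.1.2.1 0 (by omega)
    omega
  rw [conjugate, card_eq_zero, filter_eq_empty_iff] at hp0
  exact hp0 (mem_range.2 hn) hlt

variable {μ₀' : ℕ} {p' μ' : ℕ → ℕ}

theorem half_even_part_le_of_dominates (hp : IsPStar n p μ₀ μ) (hμ : μ 0 ≤ 2 * μ₀)
    (hp' : IsPStar n p' μ₀' μ') (hdom : Dominates p p') : μ₀' ≤ μ₀ := by
  rcases Nat.eq_zero_or_pos μ₀' with h0 | h0
  · omega
  have := hp'.two_mul_le_apply_zero h0
  have := hp.apply_zero_le hμ
  have : p' 0 ≤ p 0 := by simpa using hdom 1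
  omega

theorem sum_range_conjugate_le (hp : IsPStar n p μ₀ μ) (hp' : IsPStar n p' μ₀' μ')
    (hdom : Dominates p p') (hμ₀ : μ₀' ≤ μ₀) (m : ℕ) :
    ∑ j ∈ range m, conjugate n μ j ≤ ∑ j ∈ range m, conjugate n μ' j := by
  have hconj := hdom.sum_range_conjugate_le hp'.1.1 (hp.1.2.2.trans hp'.1.2.2.symm) m
  simp only [hp.conjugate_eq, hp'.conjugate_eq, sum_add_distrib, ← mul_sum] at hconj
  have : ∑ j ∈ range m, (if j < 2 * μ₀' then 1 else 0) ≤
      ∑ j ∈ range m, (if j < 2 * μ₀ then 1 else 0) :=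
    sum_le_sum fun j _ => by split_ifs <;> omega
  omega

end IsPStar

theorem IsVZ.sum_sq {n μ₀ : ℕ} {μ : ℕ → ℕ} {w : Fin n → ℕ} (hw : IsVZ n μ₀ μ w)
    (hμ : ∀ k, n ≤ k → μ k = 0) : ∑ i, w i ^ 2 = ∑ k ∈ range n, μ k * (k + 1) ^ 2 := by
  have hwn : ∀ i ∈ univ, w i ∈ range (n + 1) := by
    intro i _
    rw [mem_range]
    by_contra hi
    have : 0 < multN w (w i) := card_pos.2 ⟨i, by simp⟩
    rw [hw.2.2 _ (by omega), hμ _ (by omega)] at this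
    omega
  have hfiber : ∀ t, ∑ i with w i = t, w i ^ 2 = multN w t * t ^ 2 := fun t => by
    rw [sum_congr rfl fun i hi => by rw [(mem_filter.1 hi).2], sum_const, smul_eq_mul, multN]
  rw [← sum_fiberwise_of_maps_to hwn, sum_range_succ']
  simp only [hfiber, hw.2.2 (_ + 1) (Nat.succ_pos _), Nat.add_sub_cancel]
  simp

theorem statement4_general (n : ℕ)
    (p p' : ℕ → ℕ) (μ₀ μ₀' : ℕ) (μ μ' : ℕ → ℕ)
    (hp : IsPStar n p μ₀ μ) (hpss : μ 0 ≤ 2 * μ₀)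
    (hp' : IsPStar n p' μ₀' μ')
    (hdom : Dominates p p')
    (w w' : Fin n → ℕ) (hw : IsVZ n μ₀ μ w) (hw' : IsVZ n μ₀' μ' w') :
    enormN w ≤ enormN w' := by
  have hconj :=
    hp.sum_range_conjugate_le hp' hdom (hp.half_even_part_le_of_dominates hpss hp' hdom)
  have hsq : ∑ i, w i ^ 2 ≤ ∑ i, w' i ^ 2 := by
    rw [hw.sum_sq hp.2.2.1, hw'.sum_sq hp'.2.2.1,
      sum_range_mul_eq_sum_sum_conjugate (M := μ 0 + μ' 0) hp.2.1
        fun k _ => (hp.2.1 k.zero_le).trans (Nat.le_add_right _ _),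
      sum_range_mul_eq_sum_sum_conjugate (M := μ 0 + μ' 0) hp'.2.1
        fun k _ => (hp'.2.1 k.zero_le).trans (Nat.le_add_left _ _)]
    exact sum_sum_range_le_of_sum_range_le antitone_conjugate hconj
      (fun _ _ h => Nat.pow_le_pow_left (Nat.succ_le_succ h) 2) _
  exact Real.sqrt_le_sqrt (by exact_mod_cast hsq)

/-- If `p ∈ 𝒫**(2n)`, `p′ ∈ 𝒫*(2n)` and `p′ ≤ p` in the dominance
order, then `|v_ℤ(p)| ≤ |v_ℤ(p′)|`. -/
theorem statement4 (n : ℕ) (hn : 1 ≤ n)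
    (p p' : ℕ → ℕ) (μ₀ μ₀' : ℕ) (μ μ' : ℕ → ℕ)
    (hp : IsPStar n p μ₀ μ) (hpss : μ 0 ≤ 2 * μ₀)
    (hp' : IsPStar n p' μ₀' μ')
    (hdom : Dominates p p')
    (w w' : Fin n → ℕ) (hw : IsVZ n μ₀ μ w) (hw' : IsVZ n μ₀' μ' w') :
    enormN w ≤ enormN w' :=
  statement4_general n p p' μ₀ μ₀' μ μ' hp hpss hp' hdom w w' hw hw'
end

section
/- Suppose p, p′ ∈ 𝒫(n) and p′ ≤ p in the dominance order. Then |v_{1/2}(p)| ≤ |v_{1/2}(p′)|. -/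
open Finset

/-- `IsVHalf n p w` says that the weakly decreasing tuple `w : Fin n → ℝ` is the tuple
having `ν_k = p (k-1)` entries equal to `(2k-1)/2` for each `k ≥ 1`, where
`p = [ν₁, ν₂, …]` is a partition of `n`. -/
def IsVHalf (n : ℕ) (p : ℕ → ℕ) (w : Fin n → ℝ) : Prop :=
  Antitone w ∧ (∀ i, ∃ k : ℕ, 1 ≤ k ∧ w i = (2 * (k : ℝ) - 1) / 2) ∧
  ∀ k : ℕ, 1 ≤ k → multR w ((2 * (k : ℝ) - 1) / 2) = p (k - 1)

/-!
The entries of `v_{1/2}(p)` below `k + 1/2` number `ν₁ + ⋯ + ν_k`, so `p′ ≤ p` says that below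
every such threshold `v_{1/2}(p)` has at least as many entries as `v_{1/2}(p′)`. Both tuples
are sorted decreasingly, so an entry with `v_{1/2}(p′)ᵢ < k + 1/2 ≤ v_{1/2}(p)ᵢ` would give
`v_{1/2}(p′)` strictly more entries below `k + 1/2`. Hence `v_{1/2}(p) ≤ v_{1/2}(p′)`
entrywise, and the norms compare because all entries are positive.
-/

/-- Indexed from `0`: `oddHalf m = (2k - 1)/2` with `k = m + 1`. -/
noncomputable def oddHalf (m : ℕ) : ℝ := (2 * m + 1) / 2

lemma strictMono_oddHalf : StrictMono oddHalf := fun a b hab => by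
  have : (a : ℝ) < b := by exact_mod_cast hab
  unfold oddHalf
  linarith

lemma oddHalf_nonneg (m : ℕ) : 0 ≤ oddHalf m := by
  unfold oddHalf
  positivity

lemma Antitone.ncard_setOf_lt_lt_of_lt_of_le {α β : Type*} [LinearOrder α] [Finite α]
    [Preorder β] {v v' : α → β} (hv : Antitone v) (hv' : Antitone v') {i : α} {c : β}
    (hi' : v' i < c) (hi : c ≤ v i) :
    {j | v j < c}.ncard < {j | v' j < c}.ncard := by
  have hsub : {j | v j < c} ⊆ Set.Ioi i := fun j hj => by
    by_contra hji
    exact (hi.trans (hv (not_lt.mp hji))).not_gt hj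
  have hsup : Set.Ici i ⊆ {j | v' j < c} := fun j hj => (hv' hj).trans_lt hi'
  calc {j | v j < c}.ncard ≤ (Set.Ioi i).ncard := Set.ncard_le_ncard hsub
    _ < (Set.Ici i).ncard := Set.ncard_lt_ncard Set.Ioi_ssubset_Ici_self
    _ ≤ {j | v' j < c}.ncard := Set.ncard_le_ncard hsup

lemma enormR_le_enormR {n : ℕ} {v v' : Fin n → ℝ} (h0 : ∀ i, 0 ≤ v i) (h : ∀ i, v i ≤ v' i) :
    enormR v ≤ enormR v' :=
  Real.sqrt_le_sqrt (sum_le_sum fun i _ => pow_le_pow_left₀ (h0 i) (h i) 2)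

namespace IsVHalf

variable {n : ℕ} {p p' : ℕ → ℕ} {w w' : Fin n → ℝ}

lemma exists_eq_oddHalf (hw : IsVHalf n p w) (i : Fin n) : ∃ m, w i = oddHalf m := by
  obtain ⟨k, hk, hwi⟩ := hw.2.1 i
  refine ⟨k - 1, ?_⟩
  rw [hwi, oddHalf, Nat.cast_sub hk]
  push_cast
  ring

lemma nonneg (hw : IsVHalf n p w) (i : Fin n) : 0 ≤ w i := by
  obtain ⟨m, hm⟩ := hw.exists_eq_oddHalf i
  exact hm ▸ oddHalf_nonneg m

lemma multR_oddHalf (hw : IsVHalf n p w) (m : ℕ) : multR w (oddHalf m) = p m := by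
  have h := hw.2.2 (m + 1) (Nat.le_add_left 1 m)
  rwa [show (2 * ((m + 1 : ℕ) : ℝ) - 1) / 2 = oddHalf m by unfold oddHalf; push_cast; ring] at h

lemma ncard_setOf_lt_oddHalf (hw : IsVHalf n p w) (k : ℕ) :
    {i | w i < oddHalf k}.ncard = ∑ m ∈ range k, p m := by
  induction k with
  | zero =>
    have hempty : {i | w i < oddHalf 0} = ∅ := by
      ext i
      obtain ⟨m, hm⟩ := hw.exists_eq_oddHalf i
      simp [hm, strictMono_oddHalf.lt_iff_lt]
    rw [hempty, Set.ncard_empty, sum_range_zero]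
  | succ k ih =>
    have hsplit : {i | w i < oddHalf (k + 1)} = {i | w i < oddHalf k} ∪ {i | w i = oddHalf k} := by
      ext i
      obtain ⟨m, hm⟩ := hw.exists_eq_oddHalf i
      simp only [Set.mem_union, Set.mem_ofPred_eq, hm, strictMono_oddHalf.lt_iff_lt,
        strictMono_oddHalf.injective.eq_iff]
      omega
    have hdisj : Disjoint {i | w i < oddHalf k} {i | w i = oddHalf k} :=
      Set.disjoint_left.mpr fun _ hlt heq => hlt.ne heq
    rw [hsplit, Set.ncard_union_eq hdisj, ih, sum_range_succ]
    exact congrArg _ (hw.multR_oddHalf k)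

lemma le_of_dominates (hw : IsVHalf n p w) (hw' : IsVHalf n p' w') (hdom : Dominates p p')
    (i : Fin n) : w i ≤ w' i := by
  obtain ⟨k, hk⟩ := hw.exists_eq_oddHalf i
  obtain ⟨m, hm⟩ := hw'.exists_eq_oddHalf i
  rw [hk, hm]
  refine strictMono_oddHalf.monotone (not_lt.mp fun hmk => ?_)
  have hcount := hw.1.ncard_setOf_lt_lt_of_lt_of_le hw'.1 (c := oddHalf (m + 1))
    (hm ▸ strictMono_oddHalf (Nat.lt_succ_self m)) (hk ▸ strictMono_oddHalf.monotone hmk)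
  rw [hw.ncard_setOf_lt_oddHalf, hw'.ncard_setOf_lt_oddHalf] at hcount
  exact (hdom (m + 1)).not_gt hcount

end IsVHalf

theorem statement5_general (n : ℕ)
    (p p' : ℕ → ℕ)
    (hdom : Dominates p p')
    (w w' : Fin n → ℝ) (hw : IsVHalf n p w) (hw' : IsVHalf n p' w') :
    enormR w ≤ enormR w' :=
  enormR_le_enormR hw.nonneg (hw.le_of_dominates hw' hdom)

/-- If `p, p′ ∈ 𝒫(n)` and `p′ ≤ p` in the dominance order, then
`|v_{1/2}(p)| ≤ |v_{1/2}(p′)|`. -/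
theorem statement5 (n : ℕ) (hn : 1 ≤ n)
    (p p' : ℕ → ℕ) (hp : IsPartition n p) (hp' : IsPartition n p')
    (hdom : Dominates p p')
    (w w' : Fin n → ℝ) (hw : IsVHalf n p w) (hw' : IsVHalf n p' w') :
    enormR w ≤ enormR w' :=
  statement5_general n p p' hdom w w' hw hw'
end

section
/- Let v, v′ ∈ (ℤ≥0)ⁿ₊. If v is ℤ-triangular and |v′| < |v|, then it is not the case that p_ℤ(v′) ≤ p_ℤ(v) in the dominance order. -/
open Finset

/-- `IsPZ n v q` says that the partition `q` of `2n` is `p_ℤ(v)`: the weakly decreasing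
rearrangement of `[2·m_v(0), m_v(1), m_v(1), m_v(2), m_v(2), …]`.  Equivalently, for each
positive value `c`, the multiplicity of `c` in `q` is twice the number of `k ≥ 1` with
`m_v(k) = c`, plus one if `c = 2·m_v(0)`. -/
def IsPZ (n : ℕ) (v : Fin n → ℕ) (q : ℕ → ℕ) : Prop :=
  IsPartition (2 * n) q ∧
  ∀ c, 1 ≤ c → mult (2 * n) q c =
    2 * {k : ℕ | 1 ≤ k ∧ multN v k = c}.ncard + (if c = 2 * multN v 0 then 1 else 0)

/-!
For `ℤ`-triangular `v` the parts of `p_ℤ(v)` already come in the order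
`2m₀ ≥ m₁ = m₁ ≥ m₂ = m₂ ≥ ⋯` (with `m_k = m_v(k)`), so the first `2k+1` parts of `p_ℤ(v)` sum to
`2 m₀ + 2 (m₁ + ⋯ + m_k) = 2 #{i | vᵢ ≤ k}`, while for an arbitrary `v′` the `2k+1` largest parts
of `p_ℤ(v′)` sum to at least `2 #{i | v′ᵢ ≤ k}`. Hence `p_ℤ(v′) ≤ p_ℤ(v)` forces
`#{i | vᵢ > k} ≤ #{i | v′ᵢ > k}` for every `k`, and `|v|² = ∑ₖ (2k+1) #{i | vᵢ > k}` gives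
`|v| ≤ |v′|`. Partial sums of partitions are handled through conjugates:
`∑_{i<j} qᵢ = ∑_{c ≥ 1} min j #{i | qᵢ ≥ c}`.
-/

lemma sum_eq_sum_card_filter_le {α : Type*} (s : Finset α) (f : α → ℕ) {B : ℕ}
    (hB : ∀ i ∈ s, f i ≤ B) :
    ∑ i ∈ s, f i = ∑ c ∈ Icc 1 B, #{i ∈ s | c ≤ f i} := by
  simp only [card_filter]
  rw [sum_comm]
  refine sum_congr rfl fun i hi => ?_
  have : {c ∈ Icc 1 B | c ≤ f i} = Icc 1 (f i) := by
    ext c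
    simp only [mem_filter, mem_Icc]
    have := hB i hi
    omega
  rw [sum_boole, this, Nat.card_Icc, Nat.cast_id, Nat.add_sub_cancel]

lemma card_filter_le_eq_sum_card_filter_eq {α : Type*} (s : Finset α) (f : α → ℕ) {B : ℕ}
    (hB : ∀ i ∈ s, f i ≤ B) (c : ℕ) :
    #{i ∈ s | c ≤ f i} = ∑ d ∈ Icc c B, #{i ∈ s | f i = d} := by
  rw [card_eq_sum_card_fiberwise (f := f) (t := Icc c B)
    fun i hi => by simp only [coe_filter, Set.mem_ofPred_eq] at hi; simpa using ⟨hi.2, hB i hi.1⟩]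
  refine sum_congr rfl fun d hd => ?_
  rw [filter_filter]
  congr 1
  ext i
  simp only [mem_filter, mem_Icc] at hd ⊢
  constructor
  · rintro ⟨hi, -, rfl⟩; exact ⟨hi, rfl⟩
  · rintro ⟨hi, rfl⟩; exact ⟨hi, hd.1, rfl⟩

lemma card_filter_range_eq_min {P : ℕ → Prop} [DecidablePred P] {N : ℕ}
    (hP : ∀ ⦃i j⦄, i ≤ j → P j → P i) (hN : ∀ i, P i → i < N) (j : ℕ) :
    #{i ∈ range j | P i} = min j #{i ∈ range N | P i} := by
  have hP_iff : ∀ i, P i ↔ i < #{i ∈ range N | P i} := by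
    intro i
    constructor
    · intro hi
      have : range (i + 1) ⊆ {i ∈ range N | P i} := fun x hx => by
        simp only [mem_range] at hx
        exact mem_filter.2 ⟨mem_range.2 (hN x (hP (by omega) hi)), hP (by omega) hi⟩
      simpa using card_le_card this
    · intro hi
      by_contra hPi
      have : {i ∈ range N | P i} ⊆ range i := fun x hx => by
        simp only [mem_filter] at hx
        exact mem_range.2 (by by_contra h; exact hPi (hP (by omega) hx.2))
      have := card_le_card this
      simp only [card_range] at this
      omega
  have : {i ∈ range j | P i} = range (min j #{i ∈ range N | P i}) := by
    ext i
    rw [mem_filter, mem_range, mem_range, hP_iff]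
    omega
  rw [this, card_range]

lemma IsPartition.le {N : ℕ} {q : ℕ → ℕ} (hq : IsPartition N q) (i : ℕ) : q i ≤ N := by
  rcases lt_or_ge i N with h | h
  · exact hq.2.2 ▸ single_le_sum (fun _ _ => Nat.zero_le _) (mem_range.2 h)
  · simp [hq.2.1 i h]

lemma IsPartition.sum_range_eq {N : ℕ} {q : ℕ → ℕ} (hq : IsPartition N q) (j : ℕ) :
    ∑ i ∈ range j, q i = ∑ c ∈ Icc 1 N, min j #{i ∈ range N | c ≤ q i} := by
  rw [sum_eq_sum_card_filter_le _ _ fun i _ => hq.le i]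
  refine sum_congr rfl fun c hc => card_filter_range_eq_min
    (fun i i' hii' h => h.trans (hq.1 hii')) (fun i hi => ?_) j
  by_contra h
  rw [hq.2.1 i (by omega)] at hi
  simp only [mem_Icc] at hc
  omega

section multN

variable {n : ℕ} (w : Fin n → ℕ)

lemma multN_le (k : ℕ) : multN w k ≤ n :=
  (card_filter_le _ _).trans_eq (card_fin n)

variable {w} in
lemma le_sup_of_multN_pos {k : ℕ} (hk : 0 < multN w k) : k ≤ univ.sup w := by
  obtain ⟨i, hi⟩ := card_pos.1 hk
  exact (mem_filter.1 hi).2 ▸ le_sup (mem_univ i)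

lemma card_filter_le_eq_multN_zero_add_sum (k : ℕ) :
    #{i | w i ≤ k} = multN w 0 + ∑ l ∈ range k, multN w (l + 1) := by
  induction k with
  | zero => simp [multN]
  | succ k ih =>
    rw [sum_range_succ, ← add_assoc, ← ih, multN, ← card_union_of_disjoint]
    · congr 1
      ext i
      simp only [mem_filter, mem_union, mem_univ, true_and]
      omega
    · exact disjoint_filter.2 fun i _ h h' => by omega

lemma card_filter_le_add_card_filter_lt (k : ℕ) : #{i | w i ≤ k} + #{i | k < w i} = n := by
  simpa only [not_le, card_univ, Fintype.card_fin] using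
    card_filter_add_card_filter_not (s := univ) fun i => w i ≤ k

end multN

section pZ

variable {n : ℕ} {v : Fin n → ℕ}

lemma lt_sup_of_le_multN_succ {c l : ℕ} (hc : 1 ≤ c) (h : c ≤ multN v (l + 1)) :
    l < univ.sup v :=
  le_sup_of_multN_pos (k := l + 1) (by omega)

lemma ncard_setOf_multN_eq {c : ℕ} (hc : 1 ≤ c) :
    {k : ℕ | 1 ≤ k ∧ multN v k = c}.ncard = #{l ∈ range (univ.sup v) | multN v (l + 1) = c} := by
  have : {k : ℕ | 1 ≤ k ∧ multN v k = c} =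
      ↑(image (· + 1) {l ∈ range (univ.sup v) | multN v (l + 1) = c}) := by
    ext k
    simp only [Set.mem_ofPred_eq, coe_image, coe_filter, Set.mem_image, mem_range]
    constructor
    · rintro ⟨hk, rfl⟩
      have := le_sup_of_multN_pos (w := v) (k := k) (by omega)
      exact ⟨k - 1, ⟨by omega, by rw [Nat.sub_add_cancel hk]⟩, by omega⟩
    · rintro ⟨l, ⟨-, hl⟩, rfl⟩
      exact ⟨by omega, hl⟩
  rw [this, Set.ncard_coe_finset, card_image_of_injective _ (add_left_injective 1)]

lemma IsPZ.card_filter_range_le {q : ℕ → ℕ} (hq : IsPZ n v q) {c : ℕ} (hc : 1 ≤ c) :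
    #{i ∈ range (2 * n) | c ≤ q i} =
      2 * #{l ∈ range (univ.sup v) | c ≤ multN v (l + 1)} +
        if c ≤ 2 * multN v 0 then 1 else 0 := by
  have hm := multN_le v
  have hindicator : (if c ≤ 2 * multN v 0 then 1 else 0) =
      ∑ d ∈ Icc c (2 * n), if d = 2 * multN v 0 then 1 else 0 := by
    rw [sum_ite_eq']
    have := hm 0
    simp only [mem_Icc]
    split_ifs <;> omega
  rw [card_filter_le_eq_sum_card_filter_eq _ _ (fun i _ => hq.1.le i),
    card_filter_le_eq_sum_card_filter_eq _ _ (B := 2 * n) (fun l _ => (hm _).trans (by omega)),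
    hindicator, mul_sum, ← sum_add_distrib]
  refine sum_congr rfl fun d hd => ?_
  rw [mem_Icc] at hd
  rw [← mult, hq.2 d (by omega), ncard_setOf_multN_eq (by omega)]

variable (v) in
lemma two_mul_card_filter_le_eq_sum (k : ℕ) :
    2 * #{i | v i ≤ k} = ∑ c ∈ Icc 1 (2 * n),
      ((if c ≤ 2 * multN v 0 then 1 else 0) + 2 * #{l ∈ range k | c ≤ multN v (l + 1)}) := by
  have hm := multN_le v
  have hindicator :
      ∑ c ∈ Icc 1 (2 * n), (if c ≤ 2 * multN v 0 then 1 else 0) = 2 * multN v 0 := by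
    have : {c ∈ Icc 1 (2 * n) | c ≤ 2 * multN v 0} = Icc 1 (2 * multN v 0) := by
      ext c
      simp only [mem_filter, mem_Icc]
      have := hm 0
      omega
    rw [sum_boole, Nat.cast_id, this, Nat.card_Icc, Nat.add_sub_cancel]
  rw [sum_add_distrib, ← mul_sum, hindicator, card_filter_le_eq_multN_zero_add_sum,
    ← sum_eq_sum_card_filter_le _ _ fun l _ => (hm _).trans (by omega)]
  ring

lemma IsPZ.two_mul_card_filter_le_le_sum_range {q : ℕ → ℕ} (hq : IsPZ n v q) (k : ℕ) :
    2 * #{i | v i ≤ k} ≤ ∑ i ∈ range (2 * k + 1), q i := by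
  rw [hq.1.sum_range_eq, two_mul_card_filter_le_eq_sum]
  refine sum_le_sum fun c hc => ?_
  rw [mem_Icc] at hc
  rw [hq.card_filter_range_le hc.1]
  have hk : #{l ∈ range k | c ≤ multN v (l + 1)} ≤ k :=
    (card_filter_le _ _).trans_eq (card_range k)
  have hsup : #{l ∈ range k | c ≤ multN v (l + 1)} ≤
      #{l ∈ range (univ.sup v) | c ≤ multN v (l + 1)} :=
    card_le_card fun l hl => by
      simp only [mem_filter, mem_range] at hl ⊢
      exact ⟨lt_sup_of_le_multN_succ hc.1 hl.2, hl.2⟩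
  split_ifs <;> omega

lemma IsPZ.sum_range_le_two_mul_card_filter_le {q : ℕ → ℕ} (hq : IsPZ n v q)
    (hanti : AntitoneOn (multN v) (Set.Ici 1)) (htri : multN v 1 ≤ 2 * multN v 0) (k : ℕ) :
    ∑ i ∈ range (2 * k + 1), q i ≤ 2 * #{i | v i ≤ k} := by
  rw [hq.1.sum_range_eq, two_mul_card_filter_le_eq_sum]
  refine sum_le_sum fun c hc => ?_
  rw [mem_Icc] at hc
  rw [hq.card_filter_range_le hc.1]
  have hmin : #{l ∈ range k | c ≤ multN v (l + 1)} =
      min k #{l ∈ range (univ.sup v) | c ≤ multN v (l + 1)} :=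
    card_filter_range_eq_min
      (fun i j hij h => h.trans (hanti (by simp) (by simp) (by omega)))
      (fun l hl => lt_sup_of_le_multN_succ hc.1 hl) k
  have hempty : ¬ c ≤ 2 * multN v 0 → #{l ∈ range (univ.sup v) | c ≤ multN v (l + 1)} = 0 := by
    refine fun h => card_eq_zero.2 (filter_eq_empty_iff.2 fun l _ hl => h ?_)
    exact hl.trans ((hanti (by simp) (by simp) (by omega)).trans htri)
  split_ifs with h
  · omega
  · have := hempty h
    omega

end pZ

section norm

variable {n : ℕ}

lemma sum_range_two_mul_add_one (m : ℕ) : ∑ c ∈ range m, (2 * c + 1) = m ^ 2 := by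
  induction m with
  | zero => simp
  | succ m ih => rw [sum_range_succ, ih]; ring

lemma sum_sq_eq_sum_card_filter_lt (w : Fin n → ℕ) {B : ℕ} (hB : ∀ i, w i ≤ B) :
    ∑ i, w i ^ 2 = ∑ c ∈ range B, (2 * c + 1) * #{i | c < w i} := by
  have hrow : ∀ i, w i ^ 2 = ∑ c ∈ range B, if c < w i then 2 * c + 1 else 0 := fun i => by
    rw [← sum_filter, ← sum_range_two_mul_add_one]
    congr 1
    ext c
    simp only [mem_filter, mem_range]
    have := hB i
    omega
  simp only [hrow]
  rw [sum_comm]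
  refine sum_congr rfl fun c _ => ?_
  rw [← sum_filter, sum_const, smul_eq_mul, mul_comm]

lemma enormN_le_enormN_of_card_filter_lt_le {w w' : Fin n → ℕ}
    (h : ∀ c, #{i | c < w i} ≤ #{i | c < w' i}) : enormN w ≤ enormN w' := by
  set B := univ.sup w + univ.sup w'
  have hsq : ∑ i, w i ^ 2 ≤ ∑ i, w' i ^ 2 := by
    rw [sum_sq_eq_sum_card_filter_lt w (B := B) fun i => (le_sup (mem_univ i)).trans (by omega),
      sum_sq_eq_sum_card_filter_lt w' (B := B) fun i => (le_sup (mem_univ i)).trans (by omega)]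
    exact sum_le_sum fun c _ => Nat.mul_le_mul_left _ (h c)
  exact Real.sqrt_le_sqrt (by exact_mod_cast hsq)

end norm

lemma card_filter_lt_le_of_dominates {n : ℕ} {v v' : Fin n → ℕ} {q q' : ℕ → ℕ}
    (hq : IsPZ n v q) (hq' : IsPZ n v' q') (hanti : AntitoneOn (multN v) (Set.Ici 1))
    (htri : multN v 1 ≤ 2 * multN v 0) (hdom : Dominates q q') (k : ℕ) :
    #{i | k < v i} ≤ #{i | k < v' i} := by
  have hv := hq.sum_range_le_two_mul_card_filter_le hanti htri k
  have hv' := hq'.two_mul_card_filter_le_le_sum_range k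
  have := hdom (2 * k + 1)
  have := card_filter_le_add_card_filter_lt v k
  have := card_filter_le_add_card_filter_lt v' k
  omega

theorem statement7_general (n : ℕ)
    (v v' : Fin n → ℕ)
    (htri : ∃ (p : ℕ → ℕ) (μ₀ : ℕ) (μ : ℕ → ℕ),
      IsPStar n p μ₀ μ ∧ μ 0 ≤ 2 * μ₀ ∧ IsVZ n μ₀ μ v)
    (hlt : enormN v' < enormN v)
    (q q' : ℕ → ℕ) (hq : IsPZ n v q) (hq' : IsPZ n v' q') :
    ¬ Dominates q q' := by
  intro hdom
  obtain ⟨_, μ₀, μ, ⟨-, hμ, -⟩, hμ₀, -, hmult₀, hmult⟩ := htri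
  have hanti : AntitoneOn (multN v) (Set.Ici 1) := fun a ha b hb hab => by
    rw [hmult a ha, hmult b hb]
    exact hμ (by omega)
  have hmult₁ : multN v 1 ≤ 2 * multN v 0 := by
    rwa [hmult 1 le_rfl, hmult₀]
  exact (enormN_le_enormN_of_card_filter_lt_le
    (card_filter_lt_le_of_dominates hq hq' hanti hmult₁ hdom)).not_gt hlt

/-- Let `v, v′ ∈ (ℤ≥0)ⁿ₊`.  If `v` is `ℤ`-triangular (i.e.
`v = v_ℤ(p)` for some `p ∈ 𝒫**(2n)`) and `|v′| < |v|`, then `p_ℤ(v′) ≰ p_ℤ(v)` in the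
dominance order. -/
theorem statement7 (n : ℕ) (hn : 1 ≤ n)
    (v v' : Fin n → ℕ) (hv : Antitone v) (hv' : Antitone v')
    (htri : ∃ (p : ℕ → ℕ) (μ₀ : ℕ) (μ : ℕ → ℕ),
      IsPStar n p μ₀ μ ∧ μ 0 ≤ 2 * μ₀ ∧ IsVZ n μ₀ μ v)
    (hlt : enormN v' < enormN v)
    (q q' : ℕ → ℕ) (hq : IsPZ n v q) (hq' : IsPZ n v' q') :
    ¬ Dominates q q' :=
  statement7_general n v v' htri hlt q q' hq hq'
end

section
/- Let v, v′ ∈ (1/2+ℤ≥0)ⁿ₊. If v is (1/2)ℤ-triangular and |v′| < |v|, then it is not the case that p_{1/2}(v′) ≤ p_{1/2}(v) in the dominance order. -/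
open Finset

/-- `IsPHalf n v q` says that the partition `q` of `n` is the weakly decreasing
rearrangement of the multiplicity sequence `[m_v(1/2), m_v(3/2), m_v(5/2), …]`. -/
def IsPHalf (n : ℕ) (v : Fin n → ℝ) (q : ℕ → ℕ) : Prop :=
  IsPartition n q ∧
  ∀ c : ℕ, 1 ≤ c →
    mult n q c = {k : ℕ | 1 ≤ k ∧ multR v ((2 * (k : ℝ) - 1) / 2) = c}.ncard

/-!
Write `v i = κ i + 1/2` and let `m_j(κ) = #{i | κ i = j}` be the multiplicity of `j + 1/2`, so that
`|v|² = ∑ⱼ m_j(κ) (j + 1/2)²`. The partial sums of any sequence are bounded by those of its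
decreasing rearrangement, so those of `m(κ')` are bounded by those of `p_{1/2}(v')`, hence (by
dominance) by those of `p_{1/2}(v)`, which for triangular `v` is `m(κ)` itself. Both multiplicity
sequences sum to `n` and the weights `(j + 1/2)²` increase, so Abel summation gives `|v| ≤ |v'|`,
contradicting `|v'| < |v|`.
-/

section LayerCake

variable {ι : Type*} {s : Finset ι} {f : ι → ℕ} {C : ℕ}

theorem sum_eq_sum_Icc_card_filter_le (hf : ∀ i ∈ s, f i ≤ C) :
    ∑ i ∈ s, f i = ∑ c ∈ Icc 1 C, #{i ∈ s | c ≤ f i} := by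
  simp_rw [card_filter]
  rw [sum_comm]
  refine sum_congr rfl fun i hi => ?_
  rw [← card_filter, show {c ∈ Icc 1 C | c ≤ f i} = Icc 1 (f i) by
    ext c; have := hf i hi; simp only [mem_filter, mem_Icc]; omega]
  simp

theorem card_filter_le_eq_sum_Icc_card_filter_eq (hf : ∀ i ∈ s, f i ≤ C) (c : ℕ) :
    #{i ∈ s | c ≤ f i} = ∑ d ∈ Icc c C, #{i ∈ s | f i = d} := by
  simp_rw [card_filter]
  rw [sum_comm]
  refine sum_congr rfl fun i hi => ?_
  rw [sum_ite_eq]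
  have := hf i hi
  by_cases h : c ≤ f i <;> simp [h, this]

end LayerCake

section Rearrangement

variable {f g : ℕ → ℕ} {M N c : ℕ}

theorem card_filter_range_le_min (hf : ∀ i, M ≤ i → f i = 0) (hc : 1 ≤ c) (j : ℕ) :
    #{i ∈ range j | c ≤ f i} ≤ min j #{i ∈ range M | c ≤ f i} := by
  refine le_min ((card_filter_le _ _).trans (card_range j).le) (card_le_card fun i => ?_)
  simp only [mem_filter, mem_range]
  intro ⟨_, hi⟩
  refine ⟨?_, hi⟩
  by_contra hiM
  rw [hf i (not_lt.mp hiM)] at hi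
  omega

theorem Antitone.le_iff_lt_card_filter (hg : Antitone g) (hg0 : ∀ i, N ≤ i → g i = 0)
    (hc : 1 ≤ c) (i : ℕ) : c ≤ g i ↔ i < #{k ∈ range N | c ≤ g k} := by
  constructor
  · intro hi
    have hiN : i < N := by
      by_contra h
      rw [hg0 i (not_lt.mp h)] at hi
      omega
    have hsub : range (i + 1) ⊆ {k ∈ range N | c ≤ g k} := fun k hk => by
      rw [mem_range] at hk
      exact mem_filter.mpr ⟨mem_range.mpr (by omega), hi.trans (hg (by omega))⟩
    simpa using card_le_card hsub
  · intro hi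
    by_contra hlt
    have hsub : {k ∈ range N | c ≤ g k} ⊆ range i := fun k hk => by
      rw [mem_filter] at hk
      by_contra hki
      exact hlt (hk.2.trans (hg (not_lt.mp (mt mem_range.mpr hki))))
    have := card_le_card hsub
    rw [card_range] at this
    omega

theorem Antitone.card_filter_range_le_eq_min (hg : Antitone g) (hg0 : ∀ i, N ≤ i → g i = 0)
    (hc : 1 ≤ c) (j : ℕ) :
    #{i ∈ range j | c ≤ g i} = min j #{i ∈ range N | c ≤ g i} := by
  rw [← card_range (min j _)]
  congr 1
  ext i
  rw [mem_filter, mem_range, mem_range, hg.le_iff_lt_card_filter hg0 hc i, lt_min_iff]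

/-- Layer cake: both sides are of the form `∑_{c ≥ 1} #{i < j | c ≤ · i}`. Each count is at most
`min j #{i | c ≤ · i}`, with equality for the antitone `g`, and that bound depends only on the
multiplicities. -/
theorem sum_range_le_sum_range_of_antitone (hg : Antitone g) (hf0 : ∀ i, M ≤ i → f i = 0)
    (hg0 : ∀ i, N ≤ i → g i = 0)
    (hfg : ∀ c, 1 ≤ c → #{i ∈ range M | f i = c} = #{i ∈ range N | g i = c}) (j : ℕ) :
    ∑ i ∈ range j, f i ≤ ∑ i ∈ range j, g i := by
  set C := (range M).sup f ⊔ (range N).sup g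
  have hfC : ∀ i, f i ≤ C := fun i => by
    by_cases hi : i < M
    · exact le_sup_of_le_left (le_sup (mem_range.mpr hi))
    · simp [hf0 i (not_lt.mp hi)]
  have hgC : ∀ i, g i ≤ C := fun i => by
    by_cases hi : i < N
    · exact le_sup_of_le_right (le_sup (mem_range.mpr hi))
    · simp [hg0 i (not_lt.mp hi)]
  have hlevel : ∀ c ∈ Icc 1 C, #{i ∈ range M | c ≤ f i} = #{i ∈ range N | c ≤ g i} := by
    intro c hc
    rw [card_filter_le_eq_sum_Icc_card_filter_eq (fun i _ => hfC i),
      card_filter_le_eq_sum_Icc_card_filter_eq (fun i _ => hgC i)]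
    exact sum_congr rfl fun d hd => hfg d (by simp at hc hd; omega)
  calc ∑ i ∈ range j, f i = ∑ c ∈ Icc 1 C, #{i ∈ range j | c ≤ f i} :=
        sum_eq_sum_Icc_card_filter_le fun i _ => hfC i
    _ ≤ ∑ c ∈ Icc 1 C, min j #{i ∈ range M | c ≤ f i} :=
        sum_le_sum fun c hc => card_filter_range_le_min hf0 (mem_Icc.mp hc).1 j
    _ = ∑ c ∈ Icc 1 C, #{i ∈ range j | c ≤ g i} := sum_congr rfl fun c hc => by
        rw [hlevel c hc, hg.card_filter_range_le_eq_min hg0 (mem_Icc.mp hc).1 j]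
    _ = ∑ i ∈ range j, g i := (sum_eq_sum_Icc_card_filter_le fun i _ => hgC i).symm

end Rearrangement

theorem sum_range_mul_le_of_sum_range_le {R : Type*} [CommRing R] [PartialOrder R]
    [IsOrderedRing R] {M : ℕ} {f g b : ℕ → R} (hb : Monotone b)
    (hfg : ∀ j < M, ∑ i ∈ range j, g i ≤ ∑ i ∈ range j, f i)
    (heq : ∑ i ∈ range M, f i = ∑ i ∈ range M, g i) :
    ∑ i ∈ range M, f i * b i ≤ ∑ i ∈ range M, g i * b i := by
  have hparts := sum_range_by_parts b (fun i => f i - g i) M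
  simp only [smul_eq_mul, sum_sub_distrib, heq, sub_self, mul_zero, zero_sub] at hparts
  have hnonneg : 0 ≤ ∑ i ∈ range (M - 1),
      (b (i + 1) - b i) * (∑ k ∈ range (i + 1), f k - ∑ k ∈ range (i + 1), g k) :=
    sum_nonneg fun i hi => mul_nonneg (sub_nonneg.mpr (hb (Nat.le_succ i)))
      (sub_nonneg.mpr (hfg (i + 1) (by simp at hi; omega)))
  have hexpand : ∑ i ∈ range M, b i * (f i - g i)
      = ∑ i ∈ range M, f i * b i - ∑ i ∈ range M, g i * b i := by
    rw [← sum_sub_distrib]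
    exact sum_congr rfl fun i _ => by ring
  rw [← sub_nonpos, ← hexpand, hparts]
  exact neg_nonpos.mpr hnonneg

def fiberCard {ι : Type*} [Fintype ι] (κ : ι → ℕ) (j : ℕ) : ℕ :=
  #{i | κ i = j}

theorem sum_comp_eq_sum_range_fiberCard_smul {ι A : Type*} [Fintype ι] [AddCommMonoid A]
    {κ : ι → ℕ} {N : ℕ} (hκ : ∀ i, κ i < N) (w : ℕ → A) :
    ∑ i, w (κ i) = ∑ j ∈ range N, fiberCard κ j • w j := by
  rw [← sum_fiberwise_of_maps_to (t := range N) (fun i _ => mem_range.mpr (hκ i))]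
  refine sum_congr rfl fun j _ => ?_
  rw [sum_congr rfl fun i hi => congrArg w (mem_filter.mp hi).2, sum_const]
  rfl

theorem sum_range_fiberCard {ι : Type*} [Fintype ι] {κ : ι → ℕ} {N : ℕ} (hκ : ∀ i, κ i < N) :
    ∑ j ∈ range N, fiberCard κ j = Fintype.card ι := by
  simpa using (sum_comp_eq_sum_range_fiberCard_smul (A := ℕ) hκ fun _ => 1).symm

theorem fiberCard_eq_zero {ι : Type*} [Fintype ι] {κ : ι → ℕ} {N j : ℕ} (hκ : ∀ i, κ i < N)
    (hj : N ≤ j) : fiberCard κ j = 0 := by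
  rw [fiberCard, card_eq_zero, filter_eq_empty_iff]
  exact fun i _ => by have := hκ i; omega

theorem multR_comp_of_injective {n : ℕ} {w : ℕ → ℝ} (hw : Function.Injective w)
    (κ : Fin n → ℕ) (j : ℕ) : multR (fun i => w (κ i)) (w j) = fiberCard κ j := by
  rw [multR, fiberCard, ← Set.ncard_coe_finset, coe_filter]
  simp only [hw.eq_iff, mem_univ, true_and]

/-- The half-integer `j + 1/2`; the paper's `(2k-1)/2` is `halfOdd (k - 1)`. -/
noncomputable def halfOdd (j : ℕ) : ℝ :=
  (2 * j + 1) / 2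

theorem halfOdd_injective : Function.Injective halfOdd := fun a b h => by
  simpa [halfOdd] using h

theorem monotone_halfOdd_sq : Monotone fun j => halfOdd j ^ 2 := fun a b hab => by
  have : (a : ℝ) ≤ b := by exact_mod_cast hab
  simp only [halfOdd]
  gcongr

theorem halfOdd_eq (k : ℕ) : halfOdd k = (2 * ((k + 1 : ℕ) : ℝ) - 1) / 2 := by
  rw [halfOdd]; push_cast; ring

theorem exists_eq_halfOdd_comp {n : ℕ} {v : Fin n → ℝ}
    (hv : ∀ i, ∃ k : ℕ, 1 ≤ k ∧ v i = (2 * (k : ℝ) - 1) / 2) :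
    ∃ κ : Fin n → ℕ, v = fun i => halfOdd (κ i) := by
  choose k hk hvk using hv
  refine ⟨fun i => k i - 1, funext fun i => ?_⟩
  rw [hvk, halfOdd_eq, Nat.sub_add_cancel (hk i)]

theorem IsVHalf.fiberCard_eq {n : ℕ} {p : ℕ → ℕ} {κ : Fin n → ℕ}
    (h : IsVHalf n p fun i => halfOdd (κ i)) : fiberCard κ = p := funext fun j => by
  have hj := h.2.2 (j + 1) le_add_self
  rwa [← halfOdd_eq, multR_comp_of_injective halfOdd_injective, Nat.add_sub_cancel] at hj

theorem IsPHalf.card_filter_eq {n N c : ℕ} {q : ℕ → ℕ} {κ : Fin n → ℕ}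
    (h : IsPHalf n (fun i => halfOdd (κ i)) q) (hκ : ∀ i, κ i < N) (hc : 1 ≤ c) :
    #{i ∈ range n | q i = c} = #{j ∈ range N | fiberCard κ j = c} := by
  have hset : {k : ℕ | 1 ≤ k ∧ multR (fun i => halfOdd (κ i)) ((2 * (k : ℝ) - 1) / 2) = c}
      = (· + 1) '' ↑{j ∈ range N | fiberCard κ j = c} := by
    ext k
    simp only [Set.mem_ofPred_eq, Set.mem_image, coe_filter, mem_range]
    constructor
    · rintro ⟨hk, hkc⟩
      obtain ⟨j, rfl⟩ := Nat.exists_eq_add_of_le' hk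
      rw [← halfOdd_eq, multR_comp_of_injective halfOdd_injective] at hkc
      refine ⟨j, ⟨?_, hkc⟩, rfl⟩
      by_contra hj
      rw [fiberCard_eq_zero hκ (not_lt.mp hj)] at hkc
      omega
    · rintro ⟨j, ⟨-, hj⟩, rfl⟩
      rw [← halfOdd_eq, multR_comp_of_injective halfOdd_injective]
      exact ⟨le_add_self, hj⟩
  rw [← mult, h.2 c hc, hset, Set.ncard_image_of_injective _ (add_left_injective 1),
    Set.ncard_coe_finset]

theorem statement8_general (n : ℕ)
    (v v' : Fin n → ℝ)
    (hvmem' : ∀ i, ∃ k : ℕ, 1 ≤ k ∧ v' i = (2 * (k : ℝ) - 1) / 2)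
    (htri : ∃ p : ℕ → ℕ, IsPartition n p ∧ IsVHalf n p v)
    (hlt : enormR v' < enormR v)
    (q q' : ℕ → ℕ) (hq : IsPHalf n v q) (hq' : IsPHalf n v' q') :
    ¬ Dominates q q' := by
  intro hdom
  obtain ⟨p, hp, hvp⟩ := htri
  obtain ⟨κ, rfl⟩ := exists_eq_halfOdd_comp hvp.2.1
  obtain ⟨κ', rfl⟩ := exists_eq_halfOdd_comp hvmem'
  obtain ⟨B, hB⟩ := Finite.exists_le fun i => max (κ i) (κ' i)
  have hκ : ∀ i, κ i < B + 1 := fun i => Nat.lt_succ_of_le (le_of_max_le_left (hB i))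
  have hκ' : ∀ i, κ' i < B + 1 := fun i => Nat.lt_succ_of_le (le_of_max_le_right (hB i))
  have hanti : Antitone (fiberCard κ) := hvp.fiberCard_eq ▸ hp.1
  have hpartial (j : ℕ) : ∑ i ∈ range j, fiberCard κ' i ≤ ∑ i ∈ range j, fiberCard κ i :=
    calc ∑ i ∈ range j, fiberCard κ' i ≤ ∑ i ∈ range j, q' i :=
          sum_range_le_sum_range_of_antitone hq'.1.1 (fun _ => fiberCard_eq_zero hκ') hq'.1.2.1
            (fun _ hc => (hq'.card_filter_eq hκ' hc).symm) j
      _ ≤ ∑ i ∈ range j, q i := hdom j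
      _ ≤ ∑ i ∈ range j, fiberCard κ i :=
          sum_range_le_sum_range_of_antitone hanti hq.1.2.1 (fun _ => fiberCard_eq_zero hκ)
            (fun _ hc => hq.card_filter_eq hκ hc) j
  have hsq : ∑ i, halfOdd (κ i) ^ 2 ≤ ∑ i, halfOdd (κ' i) ^ 2 := by
    rw [sum_comp_eq_sum_range_fiberCard_smul hκ (fun j => halfOdd j ^ 2),
      sum_comp_eq_sum_range_fiberCard_smul hκ' (fun j => halfOdd j ^ 2)]
    simp only [nsmul_eq_mul]
    refine sum_range_mul_le_of_sum_range_le monotone_halfOdd_sq (fun j _ => ?_) ?_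
    · exact_mod_cast hpartial j
    · exact_mod_cast (sum_range_fiberCard hκ).trans (sum_range_fiberCard hκ').symm
  exact hlt.not_ge (Real.sqrt_le_sqrt hsq)

/-- Let `v, v′` be weakly decreasing `n`-tuples with all entries of
the form `(2k-1)/2` for `k ≥ 1`.  If `v` is `(1/2)ℤ`-triangular (i.e. it lies in
the image of `v_{1/2}`) and `|v′| < |v|`, then `p_{1/2}(v′) ≰ p_{1/2}(v)`
in the dominance order. -/
theorem statement8 (n : ℕ) (hn : 1 ≤ n)
    (v v' : Fin n → ℝ) (hv : Antitone v) (hv' : Antitone v')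
    (hvmem : ∀ i, ∃ k : ℕ, 1 ≤ k ∧ v i = (2 * (k : ℝ) - 1) / 2)
    (hvmem' : ∀ i, ∃ k : ℕ, 1 ≤ k ∧ v' i = (2 * (k : ℝ) - 1) / 2)
    (htri : ∃ p : ℕ → ℕ, IsPartition n p ∧ IsVHalf n p v)
    (hlt : enormR v' < enormR v)
    (q q' : ℕ → ℕ) (hq : IsPHalf n v q) (hq' : IsPHalf n v' q') :
    ¬ Dominates q q' :=
  statement8_general n v v' hvmem' htri hlt q q' hq hq'
end

section
/- For every v ∈ (ℤ≥0)ⁿ₊, one has |v_ℤ(p_ℤ(v))| ≤ |v|. -/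
open Finset

/-!
Write `f k = m_v(k)`. Comparing the two descriptions of the multiplicities of the parts of
`p_ℤ(v) ∈ 𝒫*(2n)` (a parity argument pins down `μ₀ = f 0`) shows that `μ₁ ≥ μ₂ ≥ ⋯` is the
decreasing rearrangement of `f 1, f 2, …`. Since `|v|² = ∑ k² f k` and `|w|² = ∑ k² μ_k`, the
inequality is the rearrangement inequality: pairing the increasing weights `k²` with a decreasing
arrangement of the same values minimizes the sum.
-/

theorem exists_perm_comp_eq_of_card_fiber_eq {ι β : Type*} [DecidableEq ι] [DecidableEq β]
    {s : Finset ι} {a b : ι → β} (h : ∀ c, #{i ∈ s | a i = c} = #{i ∈ s | b i = c}) :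
    ∃ σ : Equiv.Perm ι, {x | σ x ≠ x} ⊆ s ∧ ∀ i ∈ s, a (σ i) = b i := by
  have card_fiber (f : ι → β) (c : β) :
      Fintype.card {i : s // f i = c} = #{i ∈ s | f i = c} := by
    rw [Fintype.card_subtype, univ_eq_attach, filter_attach (fun i => f i = c), card_map,
      card_attach]
  have e (c : β) : {i : s // b i = c} ≃ {i : s // a i = c} :=
    Fintype.equivOfCardEq (by rw [card_fiber, card_fiber, h])
  let σ : Equiv.Perm s := (Equiv.sigmaFiberEquiv fun i : s => b i).symm.trans
    ((Equiv.sigmaCongrRight e).trans (Equiv.sigmaFiberEquiv fun i : s => a i))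
  refine ⟨Equiv.Perm.ofSubtype σ, fun x hx => ?_, fun i hi => ?_⟩
  · by_contra hxs
    exact hx (Equiv.Perm.ofSubtype_apply_of_not_mem σ hxs)
  · rw [Equiv.Perm.ofSubtype_apply_of_mem σ hi]
    exact (e (b i) ⟨⟨i, hi⟩, rfl⟩).2

/-- Both families of fibres partition `s`. -/
theorem card_fiber_eq_of_forall_ne {ι β : Type*} [DecidableEq β] {s : Finset ι} {a b : ι → β}
    (c₀ : β) (h : ∀ c ≠ c₀, #{i ∈ s | a i = c} = #{i ∈ s | b i = c}) (c : β) :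
    #{i ∈ s | a i = c} = #{i ∈ s | b i = c} := by
  rcases ne_or_eq c c₀ with hc | rfl
  · exact h c hc
  let T := (s.image a ∪ s.image b).erase c
  have card_ne (f : ι → β) (hf : ∀ i ∈ s, f i ∈ s.image a ∪ s.image b) :
      #{i ∈ s | ¬f i = c} = ∑ d ∈ T, #{i ∈ s | f i = d} := by
    rw [card_eq_sum_card_fiberwise (f := f) (t := T) fun i hi => ?_]
    · refine sum_congr rfl fun d hd => ?_
      rw [filter_filter]
      congr 1
      exact filter_congr fun i _ => ⟨fun h => h.2, fun h => ⟨h ▸ ne_of_mem_erase hd, h⟩⟩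
    · simp only [coe_filter, Set.mem_ofPred_eq] at hi
      exact mem_erase.2 ⟨hi.2, hf i hi.1⟩
  have ha := card_ne a fun i hi => mem_union_left _ (mem_image_of_mem a hi)
  have hb := card_ne b fun i hi => mem_union_right _ (mem_image_of_mem b hi)
  rw [sum_congr rfl fun d hd => h d (ne_of_mem_erase hd)] at ha
  have hne : #{i ∈ s | ¬a i = c} = #{i ∈ s | ¬b i = c} := ha.trans hb.symm
  have := card_filter_add_card_filter_not (s := s) (fun i => a i = c)
  have := card_filter_add_card_filter_not (s := s) (fun i => b i = c)
  omega

theorem sum_mul_le_sum_mul_of_card_fiber_eq {ι α : Type*} [LinearOrder ι] [Semiring α]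
    [LinearOrder α] [IsStrictOrderedRing α] [ExistsAddOfLE α] {s : Finset ι} {u a b : ι → α}
    (hu : Monotone u) (ha : Antitone a) (h : ∀ c, #{i ∈ s | a i = c} = #{i ∈ s | b i = c}) :
    ∑ i ∈ s, u i * a i ≤ ∑ i ∈ s, u i * b i := by
  obtain ⟨σ, hσs, hσ⟩ := exists_perm_comp_eq_of_card_fiber_eq h
  calc ∑ i ∈ s, u i * a i ≤ ∑ i ∈ s, u i * a (σ i) :=
        ((hu.antivary ha).antivaryOn s).sum_mul_le_sum_mul_comp_perm hσs
    _ = ∑ i ∈ s, u i * b i := sum_congr rfl fun i hi => by rw [hσ i hi]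

theorem exists_eq_of_multN_ne_zero {n : ℕ} {x : Fin n → ℕ} {k : ℕ} (hk : multN x k ≠ 0) :
    ∃ i, x i = k := by
  obtain ⟨i, hi⟩ := card_ne_zero.1 hk
  exact ⟨i, (mem_filter.1 hi).2⟩

theorem multN_apply_ne_zero {n : ℕ} (x : Fin n → ℕ) (i : Fin n) : multN x (x i) ≠ 0 :=
  card_ne_zero.2 ⟨i, mem_filter.2 ⟨mem_univ i, rfl⟩⟩

theorem sum_sq_eq_sum_mul_multN {n N : ℕ} (x : Fin n → ℕ) (hx : ∀ i, x i ≤ N) :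
    ∑ i, x i ^ 2 = ∑ j ∈ range N, (j + 1) ^ 2 * multN x (j + 1) := by
  have fiber (k : ℕ) : ∑ i with x i = k, x i ^ 2 = k ^ 2 * multN x k := by
    rw [sum_congr rfl fun i hi => by rw [(mem_filter.1 hi).2], sum_const, smul_eq_mul,
      mul_comm, multN]
  rw [← sum_fiberwise_of_maps_to (g := x) (t := range (N + 1))
    fun i _ => mem_range.2 (Nat.lt_succ_of_le (hx i)), sum_range_succ']
  simp only [fiber]
  ring

theorem ncard_multN_eq_card {n N : ℕ} (x : Fin n → ℕ) (hx : ∀ i, x i ≤ N) {c : ℕ} (hc : c ≠ 0) :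
    {k | 1 ≤ k ∧ multN x k = c}.ncard = #{j ∈ range N | multN x (j + 1) = c} := by
  have hshift : {k | 1 ≤ k ∧ multN x k = c} = (· + 1) '' ↑{j ∈ range N | multN x (j + 1) = c} := by
    ext k
    simp only [Set.mem_ofPred_eq, coe_filter, Set.mem_image, mem_range]
    constructor
    · rintro ⟨hk, hkc⟩
      obtain ⟨i, rfl⟩ := exists_eq_of_multN_ne_zero (hkc ▸ hc)
      have := hx i
      exact ⟨x i - 1, ⟨by omega, by rwa [Nat.sub_add_cancel hk]⟩, Nat.sub_add_cancel hk⟩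
    · rintro ⟨j, ⟨-, hj⟩, rfl⟩
      exact ⟨le_add_self, hj⟩
  rw [hshift, Set.ncard_image_of_injective _ (add_left_injective 1), Set.ncard_coe_finset]

/-- Uniqueness of the decomposition data of a partition in `𝒫*(2n)`: the single odd
multiplicity sits at the part `2x`. -/
theorem eq_of_two_mul_add_ite_eq {A B : ℕ → ℕ} {x y : ℕ}
    (h : ∀ c, 1 ≤ c → 2 * A c + (if c = 2 * x then 1 else 0) =
      2 * B c + (if c = 2 * y then 1 else 0)) :
    x = y ∧ ∀ c, 1 ≤ c → A c = B c := by
  have hxy : x = y := by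
    by_contra hne
    have := h (2 * max x y) (by omega)
    rcases le_total x y with hle | hle
    · rw [max_eq_right hle, if_neg (by omega), if_pos rfl] at this
      omega
    · rw [max_eq_left hle, if_pos rfl, if_neg (by omega)] at this
      omega
  subst hxy
  exact ⟨rfl, fun c hc => by have := h c hc; omega⟩

theorem le_of_isVZ {n μ₀ : ℕ} {μ : ℕ → ℕ} {w : Fin n → ℕ} (hw : IsVZ n μ₀ μ w)
    (hμn : ∀ i, n ≤ i → μ i = 0) (i : Fin n) : w i ≤ n := by
  have := hw.2.2 (w i)
  have := hμn (w i - 1)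
  have := multN_apply_ne_zero w i
  omega

theorem card_filter_range_eq_mult {n N c : ℕ} {μ : ℕ → ℕ} (hμn : ∀ i, n ≤ i → μ i = 0)
    (hnN : n ≤ N) (hc : c ≠ 0) : #{j ∈ range N | μ j = c} = mult n μ c := by
  unfold mult
  congr 1
  ext j
  simp only [mem_filter, mem_range]
  have := hμn j
  constructor <;> exact fun ⟨hj, hjc⟩ => ⟨by omega, hjc⟩

theorem mult_eq_ncard_of_isPZ_of_isPStar {n μ₀ : ℕ} {v : Fin n → ℕ} {q μ : ℕ → ℕ}
    (hq : IsPZ n v q) (hdata : IsPStar n q μ₀ μ) {c : ℕ} (hc : 1 ≤ c) :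
    mult n μ c = {k | 1 ≤ k ∧ multN v k = c}.ncard :=
  ((eq_of_two_mul_add_ite_eq fun c hc => (hq.2 c hc).symm.trans (hdata.2.2.2 c hc)).2 c hc).symm

theorem statement12_general (n : ℕ)
    (v : Fin n → ℕ)
    (q : ℕ → ℕ) (hq : IsPZ n v q)
    (μ₀ : ℕ) (μ : ℕ → ℕ) (hdata : IsPStar n q μ₀ μ)
    (w : Fin n → ℕ) (hw : IsVZ n μ₀ μ w) :
    enormN w ≤ enormN v := by
  have hμ : Antitone μ := hdata.2.1
  have hμn : ∀ i, n ≤ i → μ i = 0 := hdata.2.2.1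
  set N := n + univ.sup v
  have hnN : n ≤ N := Nat.le_add_right n _
  have hvN (i : Fin n) : v i ≤ N := (le_sup (mem_univ i)).trans (Nat.le_add_left _ n)
  have hwN (i : Fin n) : w i ≤ N := (le_of_isVZ hw hμn i).trans hnN
  have hfiber (c : ℕ) (hc : c ≠ 0) :
      #{j ∈ range N | μ j = c} = #{j ∈ range N | multN v (j + 1) = c} := by
    rw [card_filter_range_eq_mult hμn hnN hc, ← ncard_multN_eq_card v hvN hc,
      mult_eq_ncard_of_isPZ_of_isPStar hq hdata (Nat.one_le_iff_ne_zero.2 hc)]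
  have hsq : ∑ i, w i ^ 2 ≤ ∑ i, v i ^ 2 := by
    rw [sum_sq_eq_sum_mul_multN w hwN, sum_sq_eq_sum_mul_multN v hvN]
    simp only [fun j => hw.2.2 (j + 1) (Nat.le_add_left 1 j), Nat.add_sub_cancel]
    exact sum_mul_le_sum_mul_of_card_fiber_eq (fun _ _ h => by gcongr) hμ
      (card_fiber_eq_of_forall_ne 0 hfiber)
  exact Real.sqrt_le_sqrt (mod_cast hsq)

/-- For every `v ∈ (ℤ≥0)ⁿ₊`, one has `|v_ℤ(p_ℤ(v))| ≤ |v|`. -/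
theorem statement12 (n : ℕ) (hn : 1 ≤ n)
    (v : Fin n → ℕ) (hv : Antitone v)
    (q : ℕ → ℕ) (hq : IsPZ n v q)
    (μ₀ : ℕ) (μ : ℕ → ℕ) (hdata : IsPStar n q μ₀ μ)
    (w : Fin n → ℕ) (hw : IsVZ n μ₀ μ w) :
    enormN w ≤ enormN v :=
  statement12_general n v q hq μ₀ μ hdata w hw
end
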